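/- arXiv:2112.05305 — 5 statements merged into one kernel-verified Lean document; each statement's English description precedes it below -/
import Mathlib

section
/- Let Γ be a finite graph and K_N the complete graph on N vertices. There exists a topological embedding f of K_N into the box [0,N-1]^2 × [0,1] ⊂ ℝ^3 (with the L^∞ metric) mapping vertex v_k to (k,k,0) and each edge v_k v_l to the piecewise-linear path (k,k,0)→(l,k,0)→(l,k,1)→(l,l,1)→(l,l,0), such that f is 1-thick: any two distinct vertices, any vertex and a non-incident edge, and any two disjoint edges have images at L^∞ distance at least 1. -/
/-- The piecewise-linear path `(k,k,0) → (l,k,0) → (l,k,1) → (l,l,1) → (l,l,0)` in `ℝ³`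
used to wire the edge `v_k v_l` of the complete graph.  Note that `ℝ × ℝ × ℝ` carries the
supremum (`L^∞`) metric. -/
def kbPath (k l : ℝ) : Set (ℝ × ℝ × ℝ) :=
  segment ℝ (k, k, 0) (l, k, 0) ∪ segment ℝ (l, k, 0) (l, k, 1) ∪
    segment ℝ (l, k, 1) (l, l, 1) ∪ segment ℝ (l, l, 1) (l, l, 0)

lemma kbPath_cases {k l : ℝ} {p : ℝ × ℝ × ℝ} (hp : p ∈ kbPath k l) :
    (p.2.1 = k ∧ p.2.2 = 0) ∨ (p.1 = l ∧ p.2.1 = k) ∨ (p.1 = l ∧ p.2.2 = 1) ∨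
      (p.1 = l ∧ p.2.1 = l) := by
  rcases hp with ((h | h) | h) | h <;>
    obtain ⟨a, b, ha, hb, hab, rfl⟩ := h
  · exact Or.inl ⟨by simpa using by linear_combination k * hab, by simp⟩
  · exact Or.inr (Or.inl ⟨by simpa using by linear_combination l * hab,
      by simpa using by linear_combination k * hab⟩)
  · exact Or.inr (Or.inr (Or.inl ⟨by simpa using by linear_combination l * hab, by simpa⟩))
  · exact Or.inr (Or.inr (Or.inr ⟨by simpa using by linear_combination l * hab,
      by simpa using by linear_combination l * hab⟩))

lemma one_le_abs_cast {k l : ℕ} (h : k ≠ l) : (1 : ℝ) ≤ |(k : ℝ) - l| := by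
  have h0 : ((k : ℤ) - l) ≠ 0 := by
    simp only [sub_ne_zero]
    exact_mod_cast h
  have h1 : (1 : ℤ) ≤ |(k : ℤ) - l| := Int.one_le_abs h0
  have : ((1 : ℤ) : ℝ) ≤ (|(k : ℤ) - l| : ℝ) := by exact_mod_cast h1
  simpa [abs_sub_comm] using this

lemma dist_prod3_eq (p q : ℝ × ℝ × ℝ) :
    dist p q = max (dist p.1 q.1) (max (dist p.2.1 q.2.1) (dist p.2.2 q.2.2)) := by
  rw [Prod.dist_eq, Prod.dist_eq]

lemma dist_ge_x {p q : ℝ × ℝ × ℝ} (h : 1 ≤ |p.1 - q.1|) : 1 ≤ dist p q := by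
  rw [dist_prod3_eq]
  exact le_trans (by rwa [Real.dist_eq] ) (le_max_left _ _)

lemma dist_ge_y {p q : ℝ × ℝ × ℝ} (h : 1 ≤ |p.2.1 - q.2.1|) : 1 ≤ dist p q := by
  rw [dist_prod3_eq]
  exact le_trans (by rwa [Real.dist_eq])
    (le_trans (le_max_left _ _) (le_max_right _ _))

lemma dist_ge_z {p q : ℝ × ℝ × ℝ} (h : 1 ≤ |p.2.2 - q.2.2|) : 1 ≤ dist p q := by
  rw [dist_prod3_eq]
  exact le_trans (by rwa [Real.dist_eq])
    (le_trans (le_max_right _ _) (le_max_right _ _))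

/-- The map sending the vertex `v_k` of `K_N` to `(k,k,0)` and the edge
`v_k v_l` to the piecewise-linear path `kbPath k l` is a `1`-thick topological embedding of
`K_N` into the box `[0,N-1]² × [0,1] ⊆ ℝ³` with the `L^∞` metric: images of distinct
vertices, of a vertex and a non-incident edge, and of two disjoint edges are at `L^∞`
distance at least `1`, and the whole image lies in the box. -/
theorem thick_embedding_complete_graph_R3 (N : ℕ) :
    -- the image lies in the box `[0,N-1]² × [0,1]`
    (∀ k l : ℕ, k < N → l < N →
      kbPath k l ⊆ Set.Icc ((0 : ℝ), (0 : ℝ), (0 : ℝ)) ((N : ℝ) - 1, (N : ℝ) - 1, 1)) ∧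
    -- distinct vertices
    (∀ k l : ℕ, k < N → l < N → k ≠ l →
      1 ≤ dist (((k : ℝ), (k : ℝ), (0 : ℝ))) (((l : ℝ), (l : ℝ), (0 : ℝ)))) ∧
    -- a vertex and a non-incident edge
    (∀ i k l : ℕ, i < N → k < N → l < N → k ≠ l → i ≠ k → i ≠ l →
      ∀ p ∈ kbPath k l, 1 ≤ dist (((i : ℝ), (i : ℝ), (0 : ℝ))) p) ∧
    -- two disjoint edges
    (∀ i j k l : ℕ, i < N → j < N → k < N → l < N → i ≠ j → k ≠ l →
      i ≠ k → i ≠ l → j ≠ k → j ≠ l →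
      ∀ p ∈ kbPath i j, ∀ q ∈ kbPath k l, 1 ≤ dist p q) := by
  refine ⟨?_, ?_, ?_, ?_⟩
  · -- box containment
    intro k l hk hl
    have hconv : Convex ℝ (Set.Icc ((0 : ℝ), (0 : ℝ), (0 : ℝ))
        ((N : ℝ) - 1, (N : ℝ) - 1, 1)) := convex_Icc _ _
    have hkN : (k : ℝ) ≤ (N : ℝ) - 1 := by
      have : (k : ℝ) + 1 ≤ N := by exact_mod_cast hk
      linarith
    have hlN : (l : ℝ) ≤ (N : ℝ) - 1 := by
      have : (l : ℝ) + 1 ≤ N := by exact_mod_cast hl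
      linarith
    have hk0 : (0 : ℝ) ≤ k := Nat.cast_nonneg k
    have hl0 : (0 : ℝ) ≤ l := Nat.cast_nonneg l
    have m1 : ((k : ℝ), (k : ℝ), (0 : ℝ)) ∈ Set.Icc ((0 : ℝ), (0 : ℝ), (0 : ℝ))
        ((N : ℝ) - 1, (N : ℝ) - 1, 1) := by
      simp [Set.mem_Icc, Prod.le_def, hk0, hkN]
    have m2 : ((l : ℝ), (k : ℝ), (0 : ℝ)) ∈ Set.Icc ((0 : ℝ), (0 : ℝ), (0 : ℝ))
        ((N : ℝ) - 1, (N : ℝ) - 1, 1) := by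
      simp [Set.mem_Icc, Prod.le_def, hk0, hkN, hl0, hlN]
    have m3 : ((l : ℝ), (k : ℝ), (1 : ℝ)) ∈ Set.Icc ((0 : ℝ), (0 : ℝ), (0 : ℝ))
        ((N : ℝ) - 1, (N : ℝ) - 1, 1) := by
      simp [Set.mem_Icc, Prod.le_def, hk0, hkN, hl0, hlN]
    have m4 : ((l : ℝ), (l : ℝ), (1 : ℝ)) ∈ Set.Icc ((0 : ℝ), (0 : ℝ), (0 : ℝ))
        ((N : ℝ) - 1, (N : ℝ) - 1, 1) := by
      simp [Set.mem_Icc, Prod.le_def, hl0, hlN]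
    have m5 : ((l : ℝ), (l : ℝ), (0 : ℝ)) ∈ Set.Icc ((0 : ℝ), (0 : ℝ), (0 : ℝ))
        ((N : ℝ) - 1, (N : ℝ) - 1, 1) := by
      simp [Set.mem_Icc, Prod.le_def, hl0, hlN]
    intro p hp
    rcases hp with ((h | h) | h) | h
    · exact hconv.segment_subset m1 m2 h
    · exact hconv.segment_subset m2 m3 h
    · exact hconv.segment_subset m3 m4 h
    · exact hconv.segment_subset m4 m5 h
  · -- distinct vertices
    intro k l _ _ h
    exact dist_ge_x (one_le_abs_cast h)
  · -- vertex vs edge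
    intro i k l _ _ _ _ hik hil p hp
    rcases kbPath_cases hp with ⟨hy, _⟩ | ⟨hx, _⟩ | ⟨_, hz⟩ | ⟨hx, _⟩
    · exact dist_ge_y (by rw [hy]; exact one_le_abs_cast hik)
    · exact dist_ge_x (by rw [hx]; exact one_le_abs_cast hil)
    · exact dist_ge_z (by rw [hz]; norm_num)
    · exact dist_ge_x (by rw [hx]; exact one_le_abs_cast hil)
  · -- edge vs edge
    intro i j k l _ _ _ _ _ _ hik hil hjk hjl p hp q hq
    rcases kbPath_cases hp with ⟨hpy, hpz⟩ | ⟨hpx, hpy⟩ | ⟨hpx, hpz⟩ | ⟨hpx, hpy⟩ <;>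
      rcases kbPath_cases hq with ⟨hqy, hqz⟩ | ⟨hqx, hqy⟩ | ⟨hqx, hqz⟩ | ⟨hqx, hqy⟩
    · exact dist_ge_y (by rw [hpy, hqy]; exact one_le_abs_cast hik)
    · exact dist_ge_y (by rw [hpy, hqy]; exact one_le_abs_cast hik)
    · exact dist_ge_z (by rw [hpz, hqz]; norm_num)
    · exact dist_ge_y (by rw [hpy, hqy]; exact one_le_abs_cast hil)
    · exact dist_ge_y (by rw [hpy, hqy]; exact one_le_abs_cast hik)
    · exact dist_ge_x (by rw [hpx, hqx]; exact one_le_abs_cast hjl)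
    · exact dist_ge_x (by rw [hpx, hqx]; exact one_le_abs_cast hjl)
    · exact dist_ge_x (by rw [hpx, hqx]; exact one_le_abs_cast hjl)
    · exact dist_ge_z (by rw [hpz, hqz]; norm_num)
    · exact dist_ge_x (by rw [hpx, hqx]; exact one_le_abs_cast hjl)
    · exact dist_ge_x (by rw [hpx, hqx]; exact one_le_abs_cast hjl)
    · exact dist_ge_x (by rw [hpx, hqx]; exact one_le_abs_cast hjl)
    · exact dist_ge_y (by rw [hpy, hqy]; exact one_le_abs_cast hjk)
    · exact dist_ge_x (by rw [hpx, hqx]; exact one_le_abs_cast hjl)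
    · exact dist_ge_x (by rw [hpx, hqx]; exact one_le_abs_cast hjl)
    · exact dist_ge_x (by rw [hpx, hqx]; exact one_le_abs_cast hjl)
end

section
/- Let h_0 = (2(cosh(1)−1))^{−1/2} and φ: ℝ^2 × [0,1] → ℍ^3 be given by φ(x,y,c) = (x,y; h_0 e^{−c}) in the upper half-space model. If (x_1,y_1,c_1), (x_2,y_2,c_2) ∈ ℝ^2 × [0,1] satisfy max{|x_2−x_1|,|y_2−y_1|,|c_2−c_1|} ≥ 1, then d_{ℍ^3}(φ(x_1,y_1,c_1), φ(x_2,y_2,c_2)) ≥ 1. -/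
/-- The inverse hyperbolic cosine: `arcosh x = log (x + √(x² − 1))`. -/
noncomputable def arcosh (x : ℝ) : ℝ := Real.log (x + Real.sqrt (x ^ 2 - 1))

/-- `h₀ = (2(cosh 1 − 1))^{-1/2}`. -/
noncomputable def h0 : ℝ := (Real.sqrt (2 * (Real.cosh 1 - 1)))⁻¹

/-- The distance in the upper half-space model of `ℍ³` between `(x₁,y₁;z₁)` and
`(x₂,y₂;z₂)` (with `z₁, z₂ > 0`). -/
noncomputable def hyp3Dist (x₁ y₁ z₁ x₂ y₂ z₂ : ℝ) : ℝ :=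
  arcosh (1 + ((x₁ - x₂) ^ 2 + (y₁ - y₂) ^ 2 + (z₁ - z₂) ^ 2) / (2 * z₁ * z₂))

lemma arcosh_ge_one {A : ℝ} (hA : Real.cosh 1 ≤ A) : 1 ≤ arcosh A := by
  have hs0 : (0:ℝ) ≤ Real.sinh 1 := Real.sinh_nonneg_iff.2 one_pos.le
  have hs : Real.sinh 1 ≤ Real.sqrt (A ^ 2 - 1) := by
    have h1 : Real.sinh 1 = Real.sqrt (Real.cosh 1 ^ 2 - 1) := by
      rw [Real.cosh_sq]
      simp [Real.sqrt_sq hs0]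
    rw [h1]
    apply Real.sqrt_le_sqrt
    have : (0:ℝ) < Real.cosh 1 := Real.cosh_pos 1
    nlinarith
  have hApos : 0 < A + Real.sqrt (A ^ 2 - 1) := by
    have : (0:ℝ) < Real.cosh 1 := Real.cosh_pos 1
    have := Real.sqrt_nonneg (A ^ 2 - 1)
    linarith
  rw [arcosh, Real.le_log_iff_exp_le hApos]
  have := Real.cosh_add_sinh 1
  linarith

/-- For `φ(x,y,c) = (x,y; h₀e^{-c})` on `ℝ² × [0,1]`: if
`max{|x₂−x₁|, |y₂−y₁|, |c₂−c₁|} ≥ 1` then the hyperbolic distance between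
`φ(x₁,y₁,c₁)` and `φ(x₂,y₂,c₂)` is at least `1`. -/
theorem thick_embedding_H3 (x₁ y₁ c₁ x₂ y₂ c₂ : ℝ)
    (hc₁ : c₁ ∈ Set.Icc (0 : ℝ) 1) (hc₂ : c₂ ∈ Set.Icc (0 : ℝ) 1)
    (h : 1 ≤ max (max |x₂ - x₁| |y₂ - y₁|) |c₂ - c₁|) :
    1 ≤ hyp3Dist x₁ y₁ (h0 * Real.exp (-c₁)) x₂ y₂ (h0 * Real.exp (-c₂)) := by
  obtain ⟨h10, h11⟩ := hc₁
  obtain ⟨h20, h21⟩ := hc₂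
  have hcosh : (1:ℝ) < Real.cosh 1 := Real.one_lt_cosh.2 one_ne_zero
  have hk : (0:ℝ) < 2 * (Real.cosh 1 - 1) := by linarith
  have hh0pos : 0 < h0 := by
    rw [h0]
    exact inv_pos.2 (Real.sqrt_pos.2 hk)
  have hh0sq : h0 ^ 2 * (2 * (Real.cosh 1 - 1)) = 1 := by
    rw [h0, inv_pow, Real.sq_sqrt hk.le]
    field_simp
    exact div_self (sub_pos.2 hcosh).ne'
  set a := Real.exp (-c₁) with ha
  set b := Real.exp (-c₂) with hb
  have hapos : 0 < a := Real.exp_pos _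
  have hbpos : 0 < b := Real.exp_pos _
  have hab : a * b = Real.exp (-(c₁ + c₂)) := by
    rw [ha, hb, ← Real.exp_add]; ring_nf
  -- key inequality: numerator ≥ 2(cosh1 - 1) * z₁ * z₂
  have key : 2 * (Real.cosh 1 - 1) * ((h0 * a) * (h0 * b)) ≤
      (x₁ - x₂) ^ 2 + (y₁ - y₂) ^ 2 + (h0 * a - h0 * b) ^ 2 := by
    have hzz : 2 * (Real.cosh 1 - 1) * ((h0 * a) * (h0 * b)) = a * b := by
      have : (h0 * a) * (h0 * b) = h0 ^ 2 * (a * b) := by ring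
      rw [this]; linear_combination (a * b) * hh0sq
    rw [hzz]
    have hab1 : a * b ≤ 1 := by
      rw [hab]
      exact Real.exp_le_one_iff.2 (by linarith)
    rcases le_max_iff.mp h with h' | hc
    · rcases le_max_iff.mp h' with hx | hy
      · have : 1 ≤ (x₁ - x₂) ^ 2 := by
          have := abs_nonneg (x₂ - x₁); nlinarith [sq_abs (x₂ - x₁)]
        nlinarith [sq_nonneg (y₁ - y₂), sq_nonneg (h0 * a - h0 * b)]
      · have : 1 ≤ (y₁ - y₂) ^ 2 := by
          have := abs_nonneg (y₂ - y₁); nlinarith [sq_abs (y₂ - y₁)]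
        nlinarith [sq_nonneg (x₁ - x₂), sq_nonneg (h0 * a - h0 * b)]
    · -- |c₂ - c₁| ≥ 1
      have hcoshc : Real.cosh 1 ≤ Real.cosh (c₂ - c₁) := by
        rw [Real.cosh_le_cosh]
        rwa [abs_one]
      -- a² + b² = 2ab cosh(c₂ - c₁)
      have e1 : Real.exp (c₂ - c₁) * (a * b) = a ^ 2 := by
        rw [ha, hb, ← Real.exp_add, ← Real.exp_add,
          show c₂ - c₁ + (-c₁ + -c₂) = -c₁ + -c₁ from by ring, Real.exp_add]
        ring
      have e2 : Real.exp (-(c₂ - c₁)) * (a * b) = b ^ 2 := by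
        rw [ha, hb, ← Real.exp_add, ← Real.exp_add,
          show -(c₂ - c₁) + (-c₁ + -c₂) = -c₂ + -c₂ from by ring, Real.exp_add]
        ring
      have hsum : a ^ 2 + b ^ 2 = 2 * (a * b) * Real.cosh (c₂ - c₁) := by
        rw [Real.cosh_eq]
        linear_combination -e1 - e2
      have habge : 2 * (a * b) * (Real.cosh 1 - 1) ≤ (a - b) ^ 2 := by
        have : (a - b) ^ 2 = a ^ 2 + b ^ 2 - 2 * (a * b) := by ring
        rw [this, hsum]
        nlinarith [mul_pos hapos hbpos]
      have step : h0 ^ 2 * (2 * (a * b) * (Real.cosh 1 - 1)) ≤ h0 ^ 2 * (a - b) ^ 2 :=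
        mul_le_mul_of_nonneg_left habge (sq_nonneg h0)
      have heq : h0 ^ 2 * (2 * (a * b) * (Real.cosh 1 - 1)) = a * b := by
        linear_combination (a * b) * hh0sq
      have heq2 : (h0 * a - h0 * b) ^ 2 = h0 ^ 2 * (a - b) ^ 2 := by ring
      rw [heq2]
      linarith [sq_nonneg (x₁ - x₂), sq_nonneg (y₁ - y₂), step, heq]
  -- conclude
  have hz₁ : 0 < h0 * a := mul_pos hh0pos hapos
  have hz₂ : 0 < h0 * b := mul_pos hh0pos hbpos
  have hden : 0 < 2 * (h0 * a) * (h0 * b) := by positivity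
  apply arcosh_ge_one
  have : Real.cosh 1 - 1 ≤
      ((x₁ - x₂) ^ 2 + (y₁ - y₂) ^ 2 + (h0 * a - h0 * b) ^ 2) /
        (2 * (h0 * a) * (h0 * b)) := by
    rw [le_div_iff₀ hden]
    nlinarith [key]
  linarith
end

section
/- Let X, Y, Z be graphs and k, l positive integers such that the wiring profiles wir^k_{X→Y} and wir^l_{Y→Z} take finite values. Then for every n, wir^{kl}_{X→Z}(n) ≤ wir^l_{Y→Z}( wir^k_{X→Y}(n) ). (Composition of a coarse k-wiring with a coarse l-wiring is a coarse kl-wiring whose image is contained in that of the second wiring.) -/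
open SimpleGraph

/-- A coarse `k`-wiring of `G` into `H`. -/
structure CoarseWiring {V W : Type*} (G : SimpleGraph V) (H : SimpleGraph W) (k : ℕ) where
  vmap : V → W
  walk : ∀ u v, G.Adj u v → H.Walk (vmap u) (vmap v)
  walk_symm : ∀ u v (h : G.Adj u v), walk v u h.symm = (walk u v h).reverse
  vmap_bound : ∀ w : W, ({v : V | vmap v = w}).ncard ≤ k
  edge_bound : ∀ e : Sym2 W,
    ({e' : Sym2 V | ∃ u v, ∃ h : G.Adj u v, e' = s(u, v) ∧ e ∈ (walk u v h).edges}).ncard ≤ k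

namespace CoarseWiring

variable {V W : Type*} {G : SimpleGraph V} {H : SimpleGraph W} {k : ℕ}

/-- The set of vertices of `H` in the image of the wiring. -/
def imageVerts (ψ : CoarseWiring G H k) : Set W :=
  Set.range ψ.vmap ∪ ⋃ (u) (v) (h : G.Adj u v), {w | w ∈ (ψ.walk u v h).support}

/-- The volume of a wiring: the number of vertices in its image. -/
noncomputable def vol (ψ : CoarseWiring G H k) : ℕ := ψ.imageVerts.ncard

/-- The diameter of a wiring: the diameter of its image, measured in the path
metric of the target graph. -/
noncomputable def wdiam (ψ : CoarseWiring G H k) : ℕ :=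
  sSup {d : ℕ | ∃ a ∈ ψ.imageVerts, ∃ b ∈ ψ.imageVerts, d = H.dist a b}

end CoarseWiring

namespace CoarseWiring

variable {V W : Type*} {Y : SimpleGraph V} {Z : SimpleGraph W} {l : ℕ} {Δ : Y.Subgraph}

def comp (φ : CoarseWiring Δ.coe Z l) :
    ∀ {a b : V} (p : Y.Walk a b) (ha : a ∈ Δ.verts) (hb : b ∈ Δ.verts),
      (∀ e ∈ p.edges, e ∈ Δ.edgeSet) → Z.Walk (φ.vmap ⟨a, ha⟩) (φ.vmap ⟨b, hb⟩)
  | _, _, Walk.nil, _, _, _ => Walk.nil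
  | _, _, Walk.cons h p, ha, hb, hp =>
    have hadj : Δ.Adj _ _ := Subgraph.mem_edgeSet.1 (hp _ (by simp))
    (φ.walk ⟨_, ha⟩ ⟨_, Δ.edge_vert hadj.symm⟩ hadj).append
      (comp φ p (Δ.edge_vert hadj.symm) hb fun e he => hp e (by simp [he]))

lemma comp_congr (φ : CoarseWiring Δ.coe Z l) {a b : V} {p p' : Y.Walk a b} (h : p = p')
    (ha : a ∈ Δ.verts) (hb : b ∈ Δ.verts) (hp : ∀ e ∈ p.edges, e ∈ Δ.edgeSet)
    (hp' : ∀ e ∈ p'.edges, e ∈ Δ.edgeSet) :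
    comp φ p ha hb hp = comp φ p' ha hb hp' := by subst h; rfl

lemma comp_append (φ : CoarseWiring Δ.coe Z l) {a b c : V} (p : Y.Walk a b) (q : Y.Walk b c)
    (ha : a ∈ Δ.verts) (hb : b ∈ Δ.verts) (hc : c ∈ Δ.verts)
    (hpq : ∀ e ∈ (p.append q).edges, e ∈ Δ.edgeSet) :
    comp φ (p.append q) ha hc hpq =
      (comp φ p ha hb fun e he => hpq e (by simp [he])).append
        (comp φ q hb hc fun e he => hpq e (by simp [he])) := by
  induction p with
  | nil => rfl
  | cons h p ih =>
    have hv := Δ.edge_vert (Subgraph.mem_edgeSet.1 (hpq _ (by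
      rw [Walk.cons_append, Walk.edges_cons]; exact List.mem_cons_self))).symm
    simp only [Walk.cons_append, comp]
    rw [← Walk.append_assoc]
    exact congrArg _ (ih q hv hb fun e he => hpq e (by
      rw [Walk.cons_append, Walk.edges_cons]; exact List.mem_cons_of_mem _ he))

lemma comp_reverse (φ : CoarseWiring Δ.coe Z l) {a b : V} (p : Y.Walk a b)
    (ha : a ∈ Δ.verts) (hb : b ∈ Δ.verts) (hp : ∀ e ∈ p.edges, e ∈ Δ.edgeSet)
    (hp' : ∀ e ∈ p.reverse.edges, e ∈ Δ.edgeSet) :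
    comp φ p.reverse hb ha hp' = (comp φ p ha hb hp).reverse := by
  induction p with
  | nil => rfl
  | cons h p ih =>
    have hadj : Δ.Adj _ _ := Subgraph.mem_edgeSet.1
      (hp _ (by rw [Walk.edges_cons]; exact List.mem_cons_self))
    have hc := Δ.edge_vert hadj.symm
    rw [comp_congr φ (Walk.reverse_cons h p) hb ha hp'
        (fun e he => hp' e (by rw [Walk.reverse_cons]; exact he)),
      comp_append φ p.reverse (Walk.cons h.symm Walk.nil) hb hc ha,
      ih hc hb (fun e he => hp e (by rw [Walk.edges_cons]; exact List.mem_cons_of_mem _ he))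
        (fun e he => hp' e (by
          rw [Walk.reverse_cons, Walk.edges_append]; exact List.mem_append_left _ he))]
    simp only [comp]
    rw [Walk.reverse_append, Walk.append_nil]
    exact congrArg _ (φ.walk_symm ⟨_, ha⟩ ⟨_, hc⟩ hadj)

lemma mem_imageVerts_comp (φ : CoarseWiring Δ.coe Z l) {a b : V} (p : Y.Walk a b)
    (ha : a ∈ Δ.verts) (hb : b ∈ Δ.verts) (hp : ∀ e ∈ p.edges, e ∈ Δ.edgeSet)
    {w : W} (hw : w ∈ (comp φ p ha hb hp).support) : w ∈ φ.imageVerts := by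
  induction p with
  | nil =>
    simp only [comp, Walk.support_nil, List.mem_singleton] at hw
    exact Or.inl ⟨_, hw.symm⟩
  | cons h p ih =>
    simp only [comp] at hw
    rw [Walk.mem_support_append_iff] at hw
    cases hw with
    | inl hw => exact Or.inr (Set.mem_iUnion.2 ⟨_, Set.mem_iUnion.2 ⟨_, Set.mem_iUnion.2 ⟨_, hw⟩⟩⟩)
    | inr hw => exact ih _ _ _ hw

lemma exists_of_mem_edges_comp (φ : CoarseWiring Δ.coe Z l) {a b : V} (p : Y.Walk a b)
    (ha : a ∈ Δ.verts) (hb : b ∈ Δ.verts) (hp : ∀ e ∈ p.edges, e ∈ Δ.edgeSet)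
    {e : Sym2 W} (he : e ∈ (comp φ p ha hb hp).edges) :
    ∃ x y : Δ.verts, ∃ h : Δ.coe.Adj x y, e ∈ (φ.walk x y h).edges ∧ s(x.1, y.1) ∈ p.edges := by
  induction p with
  | nil => simp [comp] at he
  | cons h p ih =>
    simp only [comp, Walk.edges_append, List.mem_append] at he
    cases he with
    | inl he => exact ⟨_, _, _, he, by rw [Walk.edges_cons]; exact List.mem_cons_self⟩
    | inr he =>
      obtain ⟨x, y, hxy, he, hmem⟩ := ih _ _ _ he
      exact ⟨x, y, hxy, he, by rw [Walk.edges_cons]; exact List.mem_cons_of_mem _ hmem⟩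

lemma imageVerts_finite' {V' W' : Type*} {G : SimpleGraph V'} {H : SimpleGraph W'} {k : ℕ}
    [Finite V'] (ψ : CoarseWiring G H k) : ψ.imageVerts.Finite :=
  (Set.finite_range _).union (Set.finite_iUnion fun _ => Set.finite_iUnion fun _ =>
    Set.finite_iUnion fun h => (List.finite_toSet _))

lemma ncard_biUnion_le' {α β : Type*} [Finite α] [Finite β] {S : Set α} {B : α → Set β}
    {l k : ℕ} (hS : S.ncard ≤ l) (hB : ∀ a ∈ S, (B a).ncard ≤ k) :
    (⋃ a ∈ S, B a).ncard ≤ l * k := by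
  classical
  cases nonempty_fintype α; cases nonempty_fintype β
  have h1 : (⋃ a ∈ S, B a) = ↑(S.toFinset.biUnion fun a => (B a).toFinset) := by
    ext x; simp
  rw [h1, Set.ncard_coe_finset]
  calc (S.toFinset.biUnion fun a => (B a).toFinset).card
      ≤ ∑ a ∈ S.toFinset, (B a).toFinset.card := Finset.card_biUnion_le
    _ ≤ ∑ _a ∈ S.toFinset, k := Finset.sum_le_sum fun a haa => by
        rw [← Set.ncard_eq_toFinset_card']; exact hB a (Set.mem_toFinset.1 haa)
    _ = S.toFinset.card * k := by rw [Finset.sum_const, smul_eq_mul]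
    _ ≤ l * k := Nat.mul_le_mul_right _ (by rw [← Set.ncard_eq_toFinset_card']; exact hS)

end CoarseWiring


/-- `wir k G H` : the minimal volume of a coarse `k`-wiring of `G` into `H`
(`⊤` if there is none). -/
noncomputable def wir {V W : Type*} (k : ℕ) (G : SimpleGraph V) (H : SimpleGraph W) : ℕ∞ :=
  sInf {n : ℕ∞ | ∃ ψ : CoarseWiring G H k, n = (ψ.vol : ℕ∞)}

/-- The `k`-wiring profile of `X` into `Y`. -/
noncomputable def wirProfile {V W : Type*} (k : ℕ) (X : SimpleGraph V) (Y : SimpleGraph W)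
    (n : ℕ) : ℕ∞ :=
  sSup {m : ℕ∞ | ∃ Γ : X.Subgraph, Γ.verts.Finite ∧ Γ.verts.ncard ≤ n ∧ m = wir k Γ.coe Y}

lemma exists_wiring_vol_eq {V W : Type*} {G : SimpleGraph V} {H : SimpleGraph W} {k : ℕ}
    (h : wir k G H ≠ ⊤) : ∃ ψ : CoarseWiring G H k, (ψ.vol : ℕ∞) = wir k G H := by
  have hlt : wir k G H < wir k G H + 1 := (ENat.lt_add_one_iff h).2 le_rfl
  obtain ⟨a, ⟨ψ, rfl⟩, hle⟩ := sInf_lt_iff.1 hlt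
  exact ⟨ψ, le_antisymm ((ENat.lt_add_one_iff h).1 hle) (sInf_le ⟨ψ, rfl⟩)⟩

/-- Composition of coarse wirings.
If the wiring profiles `wir^k_{X→Y}` and `wir^l_{Y→Z}` take finite values, then
`wir^{kl}_{X→Z}(n) ≤ wir^l_{Y→Z}(wir^k_{X→Y}(n))` for every `n`. -/
theorem wirProfile_composition {U V W : Type*} (X : SimpleGraph U) (Y : SimpleGraph V)
    (Z : SimpleGraph W) (k l : ℕ) (hk : 0 < k) (hl : 0 < l)
    (hXY : ∀ n, wirProfile k X Y n ≠ ⊤) (hYZ : ∀ n, wirProfile l Y Z n ≠ ⊤) (n : ℕ) :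
    wirProfile (k * l) X Z n ≤ wirProfile l Y Z ((wirProfile k X Y n).toNat) := by
  set m := (wirProfile k X Y n).toNat with hm
  refine sSup_le ?_
  rintro x ⟨Γ, hΓfin, hΓcard, rfl⟩
  haveI := hΓfin.to_subtype
  have h1 : wir k Γ.coe Y ≤ wirProfile k X Y n := le_sSup ⟨Γ, hΓfin, hΓcard, rfl⟩
  have h1t : wir k Γ.coe Y ≠ ⊤ := fun ht => hXY n (top_le_iff.1 (ht ▸ h1))
  obtain ⟨ψ, hψ⟩ := exists_wiring_vol_eq h1t
  let Δ : Y.Subgraph :=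
    { verts := ψ.imageVerts
      Adj := fun a b => ∃ u v, ∃ h : Γ.coe.Adj u v, s(a, b) ∈ (ψ.walk u v h).edges
      adj_sub := fun ⟨u, v, h, he⟩ => (ψ.walk u v h).adj_of_mem_edges he
      edge_vert := fun ⟨u, v, h, he⟩ => Or.inr (Set.mem_iUnion.2 ⟨u, Set.mem_iUnion.2 ⟨v,
        Set.mem_iUnion.2 ⟨h, (ψ.walk u v h).fst_mem_support_of_mem_edges he⟩⟩⟩)
      symm := ⟨fun a b ⟨u, v, h, he⟩ => ⟨u, v, h, by rwa [Sym2.eq_swap]⟩⟩ }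
  have hΔfin : Δ.verts.Finite := ψ.imageVerts_finite'
  haveI := hΔfin.to_subtype
  have hΔcard : Δ.verts.ncard ≤ m := by
    have h3 : (ψ.vol : ℕ∞) ≤ wirProfile k X Y n := hψ ▸ h1
    have h4 := ENat.toNat_le_toNat h3 (hXY n)
    rwa [ENat.toNat_coe] at h4
  have h2 : wir l Δ.coe Z ≤ wirProfile l Y Z m := le_sSup ⟨Δ, hΔfin, hΔcard, rfl⟩
  have h2t : wir l Δ.coe Z ≠ ⊤ := fun ht => hYZ m (top_le_iff.1 (ht ▸ h2))
  obtain ⟨φ, hφ⟩ := exists_wiring_vol_eq h2t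
  have hedge : ∀ (u v : Γ.verts) (h : Γ.coe.Adj u v),
      ∀ e ∈ (ψ.walk u v h).edges, e ∈ Δ.edgeSet := by
    intro u v h e he
    induction e using Sym2.ind with
    | _ a b => exact Subgraph.mem_edgeSet.2 ⟨u, v, h, he⟩
  have hmem : ∀ v : Γ.verts, ψ.vmap v ∈ Δ.verts := fun v => Or.inl ⟨v, rfl⟩
  let χ : CoarseWiring Γ.coe Z (k * l) :=
    { vmap := fun v => φ.vmap ⟨ψ.vmap v, hmem v⟩
      walk := fun u v h =>
        CoarseWiring.comp φ (ψ.walk u v h) (hmem u) (hmem v) (hedge u v h)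
      walk_symm := fun u v h => by
        have H' : ∀ e ∈ (ψ.walk u v h).reverse.edges, e ∈ Δ.edgeSet := fun e he =>
          hedge u v h e (by rwa [Walk.edges_reverse, List.mem_reverse] at he)
        show CoarseWiring.comp φ (ψ.walk v u h.symm) (hmem v) (hmem u) (hedge v u h.symm) =
          (CoarseWiring.comp φ (ψ.walk u v h) (hmem u) (hmem v) (hedge u v h)).reverse
        rw [CoarseWiring.comp_congr φ (ψ.walk_symm u v h) (hmem v) (hmem u)
          (hedge v u h.symm) H']
        exact CoarseWiring.comp_reverse φ (ψ.walk u v h) (hmem u) (hmem v) (hedge u v h) H'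
      vmap_bound := fun w => by
        have hsub : {v : Γ.verts | φ.vmap ⟨ψ.vmap v, hmem v⟩ = w} ⊆
            ⋃ y ∈ {y : Δ.verts | φ.vmap y = w}, {v : Γ.verts | ψ.vmap v = (y : V)} :=
          fun v hv => Set.mem_biUnion hv rfl
        refine le_trans (Set.ncard_le_ncard hsub (Set.toFinite _)) ?_
        rw [mul_comm]
        exact CoarseWiring.ncard_biUnion_le' (φ.vmap_bound w) fun y _ => ψ.vmap_bound (y : V)
      edge_bound := fun e => by
        have hsub : {e' : Sym2 Γ.verts | ∃ u v, ∃ h : Γ.coe.Adj u v, e' = s(u, v) ∧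
            e ∈ (CoarseWiring.comp φ (ψ.walk u v h) (hmem u) (hmem v) (hedge u v h)).edges} ⊆
            ⋃ f ∈ {f : Sym2 Δ.verts | ∃ x y, ∃ hxy : Δ.coe.Adj x y, f = s(x, y) ∧
                e ∈ (φ.walk x y hxy).edges},
              {e' : Sym2 Γ.verts | ∃ u v, ∃ h : Γ.coe.Adj u v, e' = s(u, v) ∧
                Sym2.map Subtype.val f ∈ (ψ.walk u v h).edges} := by
          rintro e' ⟨u, v, h, rfl, he⟩
          obtain ⟨x, y, hxy, hee, hmm⟩ := CoarseWiring.exists_of_mem_edges_comp φ _ _ _ _ he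
          exact Set.mem_biUnion ⟨x, y, hxy, rfl, hee⟩
            ⟨u, v, h, rfl, by rwa [Sym2.map_pair_eq]⟩
        refine le_trans (Set.ncard_le_ncard hsub (Set.toFinite _)) ?_
        rw [mul_comm]
        exact CoarseWiring.ncard_biUnion_le' (φ.edge_bound e)
          fun f _ => ψ.edge_bound (Sym2.map Subtype.val f) }
  calc wir (k * l) Γ.coe Z ≤ (χ.vol : ℕ∞) := sInf_le ⟨χ, rfl⟩
    _ ≤ (φ.vol : ℕ∞) := by
        have hsub : χ.imageVerts ⊆ φ.imageVerts := by
          rintro w (⟨v, rfl⟩ | hw)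
          · exact Or.inl ⟨_, rfl⟩
          · simp only [Set.mem_iUnion] at hw
            obtain ⟨u, v, h, hw⟩ := hw
            exact CoarseWiring.mem_imageVerts_comp φ _ _ _ _ hw
        exact_mod_cast Set.ncard_le_ncard hsub (CoarseWiring.imageVerts_finite' φ)
    _ = wir l Δ.coe Z := hφ
    _ ≤ wirProfile l Y Z m := h2
end

section
/- Define the binary-tree wiring into ℤ^2: for the depth-k binary tree B_k with vertices the binary strings v = (v_1,…,v_m) of length m ≤ k, let ψ(v) = ( Σ_{i: v_i=0} 2^{k−i}, Σ_{j: v_j=1} 2^{k−j} ) ∈ ℤ^2. Then ψ is injective on vertices of B_k, and connecting ψ(v) to ψ(v·0) by a horizontal lattice segment and ψ(v) to ψ(v·1) by a vertical lattice segment yields a coarse 1-wiring of B_k into ℤ^2 (each lattice edge lies on at most one of these segments). -/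
/-- The wiring map of the depth-`k` binary tree into `ℤ²`: a binary string
`v = (v₁,…,v_m)` (as a list of booleans, `false = 0`, `true = 1`) of length `m ≤ k` is
sent to `( Σ_{i : v_i = 0} 2^{k−i}, Σ_{i : v_i = 1} 2^{k−i} )`. -/
def treeMap (k : ℕ) (l : List Bool) : ℤ × ℤ :=
  (∑ i ∈ Finset.range l.length, if l.getD i true = false then (2 : ℤ) ^ (k - 1 - i) else 0,
   ∑ i ∈ Finset.range l.length, if l.getD i false = true then (2 : ℤ) ^ (k - 1 - i) else 0)

lemma treeMap_cons (k : ℕ) (a : Bool) (t : List Bool) :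
    treeMap k (a :: t) =
      (((if a = false then (2:ℤ)^(k-1) else 0) + (treeMap (k-1) t).1),
       ((if a = true then (2:ℤ)^(k-1) else 0) + (treeMap (k-1) t).2)) := by
  unfold treeMap
  simp only [List.length_cons, Finset.sum_range_succ']
  refine Prod.ext ?_ ?_ <;>
  · simp only [List.getD_cons_succ, List.getD_cons_zero]
    rw [add_comm]
    congr 1
    apply Finset.sum_congr rfl
    intro i _
    congr 2
    omega

lemma sum_pows {m k : ℕ} (h : m ≤ k) :
    (∑ i ∈ Finset.range m, (2:ℤ)^(k-1-i)) = 2^k - 2^(k-m) := by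
  induction m with
  | zero => simp
  | succ n ih =>
    rw [Finset.sum_range_succ, ih (by omega)]
    have h1 : k - n = (k - (n+1)) + 1 := by omega
    have h2 : k - 1 - n = k - (n+1) := by omega
    rw [h1, h2, pow_succ]
    ring

lemma treeMap_fst_nonneg (k : ℕ) (l : List Bool) : 0 ≤ (treeMap k l).1 := by
  unfold treeMap; dsimp only; apply Finset.sum_nonneg; intro i _; split <;> positivity

lemma treeMap_snd_nonneg (k : ℕ) (l : List Bool) : 0 ≤ (treeMap k l).2 := by
  unfold treeMap; dsimp only; apply Finset.sum_nonneg; intro i _; split <;> positivity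

lemma treeMap_add (k : ℕ) (l : List Bool) (h : l.length ≤ k) :
    (treeMap k l).1 + (treeMap k l).2 = 2^k - 2^(k - l.length) := by
  unfold treeMap
  rw [← Finset.sum_add_distrib, ← sum_pows h]
  apply Finset.sum_congr rfl
  intro i hi
  rw [Finset.mem_range] at hi
  rw [List.getD_eq_getElem l true hi, List.getD_eq_getElem l false hi]
  cases l[i] <;> simp

lemma treeMap_fst_lt (k : ℕ) (l : List Bool) (h : l.length ≤ k) :
    (treeMap k l).1 < 2^k := by
  have h1 := treeMap_add k l h
  have h2 := treeMap_snd_nonneg k l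
  have h3 : (0:ℤ) < 2^(k - l.length) := by positivity
  omega

lemma treeMap_snd_lt (k : ℕ) (l : List Bool) (h : l.length ≤ k) :
    (treeMap k l).2 < 2^k := by
  have h1 := treeMap_add k l h
  have h2 := treeMap_fst_nonneg k l
  have h3 : (0:ℤ) < 2^(k - l.length) := by positivity
  omega

lemma treeMap_nil (k : ℕ) : treeMap k [] = (0, 0) := by simp [treeMap]

lemma treeMap_inj : ∀ (k : ℕ) (l₁ l₂ : List Bool), l₁.length ≤ k → l₂.length ≤ k →
    treeMap k l₁ = treeMap k l₂ → l₁ = l₂ := by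
  intro k l₁
  induction l₁ generalizing k with
  | nil =>
    intro l₂ _ h2 he
    cases l₂ with
    | nil => rfl
    | cons a t =>
      exfalso
      have h4 := treeMap_add k (a :: t) h2
      rw [← he, treeMap_nil] at h4
      have h5 : (2:ℤ)^(k - (a::t).length) < 2^k := by
        apply pow_lt_pow_right₀ (by norm_num)
        simp at h2 ⊢; omega
      norm_num at h4; simp only [List.length_cons] at h5
      linarith
  | cons a t ih =>
    intro l₂ h1 h2 he
    cases l₂ with
    | nil =>
      exfalso
      have h4 := treeMap_add k (a :: t) h1
      rw [he, treeMap_nil] at h4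
      have h5 : (2:ℤ)^(k - (a::t).length) < 2^k := by
        apply pow_lt_pow_right₀ (by norm_num)
        simp at h1 ⊢; omega
      norm_num at h4; simp only [List.length_cons] at h5
      linarith
    | cons a' t' =>
      have ht : t.length ≤ k - 1 := by simp at h1; omega
      have ht' : t'.length ≤ k - 1 := by simp at h2; omega
      rw [treeMap_cons, treeMap_cons] at he
      have hx1 := treeMap_fst_lt (k-1) t ht
      have hx2 := treeMap_fst_lt (k-1) t' ht'
      have hy1 := treeMap_snd_lt (k-1) t ht
      have hy2 := treeMap_snd_lt (k-1) t' ht'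
      have hn1 := treeMap_fst_nonneg (k-1) t
      have hn2 := treeMap_fst_nonneg (k-1) t'
      have hm1 := treeMap_snd_nonneg (k-1) t
      have hm2 := treeMap_snd_nonneg (k-1) t'
      rw [Prod.mk.injEq] at he
      have haa : a = a' := by
        cases a <;> cases a' <;> simp_all <;> omega
      subst haa
      have heq : treeMap (k-1) t = treeMap (k-1) t' := by
        cases a <;> simp_all [Prod.ext_iff] <;> omega
      rw [ih (k-1) t' ht ht' heq]

lemma getD_append_left (l : List Bool) (b d : Bool) (i : ℕ) (h : i < l.length) :
    (l ++ [b]).getD i d = l.getD i d := by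
  rw [List.getD_eq_getElem _ d (by simp; omega), List.getD_eq_getElem l d h,
    List.getElem_append_left]

lemma getD_append_self (l : List Bool) (b d : Bool) :
    (l ++ [b]).getD l.length d = b := by
  rw [List.getD_eq_getElem _ d (by simp)]
  simp

lemma treeMap_append (k : ℕ) (l : List Bool) (b : Bool) (h : l.length < k) :
    treeMap k (l ++ [b]) =
      if b then ((treeMap k l).1, (treeMap k l).2 + 2 ^ (k - l.length - 1))
      else ((treeMap k l).1 + 2 ^ (k - l.length - 1), (treeMap k l).2) := by
  have hl : (l ++ [b]).length = l.length + 1 := by simp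
  unfold treeMap
  rw [hl, Finset.sum_range_succ, Finset.sum_range_succ,
    getD_append_self, getD_append_self]
  have e1 : (∑ i ∈ Finset.range l.length,
        if (l ++ [b]).getD i true = false then (2:ℤ) ^ (k - 1 - i) else 0)
      = ∑ i ∈ Finset.range l.length,
        if l.getD i true = false then (2:ℤ) ^ (k - 1 - i) else 0 := by
    refine Finset.sum_congr rfl fun i hi => ?_
    rw [Finset.mem_range] at hi
    rw [getD_append_left l b true i hi]
  have e2 : (∑ i ∈ Finset.range l.length,
        if (l ++ [b]).getD i false = true then (2:ℤ) ^ (k - 1 - i) else 0)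
      = ∑ i ∈ Finset.range l.length,
        if l.getD i false = true then (2:ℤ) ^ (k - 1 - i) else 0 := by
    refine Finset.sum_congr rfl fun i hi => ?_
    rw [Finset.mem_range] at hi
    rw [getD_append_left l b false i hi]
  have h2 : (2:ℤ) ^ (k - 1 - l.length) = 2 ^ (k - l.length - 1) := by
    congr 1; omega
  rw [e1, e2, h2]
  cases b <;> simp

lemma snd_pos_of_true (k i : ℕ) (l : List Bool) (h : l.getD i false = true) :
    0 < (treeMap k l).2 := by
  have hi : i < l.length := by
    by_contra hc
    rw [List.getD_eq_default l false (by omega)] at h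
    simp at h
  calc (0:ℤ) < 2 ^ (k - 1 - i) := by positivity
    _ = if l.getD i false = true then (2:ℤ) ^ (k - 1 - i) else 0 := by rw [if_pos h]
    _ ≤ (treeMap k l).2 := by
        unfold treeMap; dsimp only
        exact Finset.single_le_sum (f := fun i =>
          if l.getD i false = true then (2:ℤ) ^ (k - 1 - i) else 0)
          (fun j _ => by split <;> positivity) (Finset.mem_range.2 hi)

lemma fst_pos_of_false (k i : ℕ) (l : List Bool) (h : l.getD i true = false) :
    0 < (treeMap k l).1 := by
  have hi : i < l.length := by
    by_contra hc
    rw [List.getD_eq_default l true (by omega)] at h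
    simp at h
  calc (0:ℤ) < 2 ^ (k - 1 - i) := by positivity
    _ = if l.getD i true = false then (2:ℤ) ^ (k - 1 - i) else 0 := by rw [if_pos h]
    _ ≤ (treeMap k l).1 := by
        unfold treeMap; dsimp only
        exact Finset.single_le_sum (f := fun i =>
          if l.getD i true = false then (2:ℤ) ^ (k - 1 - i) else 0)
          (fun j _ => by split <;> positivity) (Finset.mem_range.2 hi)

lemma snd_eq_getD : ∀ (k : ℕ) (l l' : List Bool), l.length ≤ k → l'.length ≤ k →
    (treeMap k l).2 = (treeMap k l').2 → ∀ i, l.getD i false = l'.getD i false := by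
  intro k l
  induction l generalizing k with
  | nil =>
    intro l' _ _ he i
    rw [treeMap_nil] at he
    simp only [List.getD_nil]
    by_contra hc
    have := snd_pos_of_true k i l' (by revert hc; cases l'.getD i false <;> simp)
    omega
  | cons a t ih =>
    intro l' h1 h2 he i
    cases l' with
    | nil =>
      rw [treeMap_nil] at he
      simp only [List.getD_nil]
      by_contra hc
      have := snd_pos_of_true k i (a :: t) (by revert hc; cases (a::t).getD i false <;> simp)
      omega
    | cons a' t' =>
      have ht : t.length ≤ k - 1 := by simp at h1; omega
      have ht' : t'.length ≤ k - 1 := by simp at h2; omega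
      rw [treeMap_cons, treeMap_cons] at he
      simp only at he
      have hy1 := treeMap_snd_lt (k-1) t ht
      have hy2 := treeMap_snd_lt (k-1) t' ht'
      have hm1 := treeMap_snd_nonneg (k-1) t
      have hm2 := treeMap_snd_nonneg (k-1) t'
      have hk1 : k - 1 ≤ k := by omega
      have hpow : (2:ℤ)^(k-1) ≤ 2^(k-1) := le_refl _
      have haa : a = a' := by cases a <;> cases a' <;> simp_all <;> linarith
      subst haa
      have heq : (treeMap (k-1) t).2 = (treeMap (k-1) t').2 := by
        cases a <;> simp_all
      cases i with
      | zero => simp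
      | succ n => simpa using ih (k-1) t' ht ht' heq n

lemma fst_eq_getD : ∀ (k : ℕ) (l l' : List Bool), l.length ≤ k → l'.length ≤ k →
    (treeMap k l).1 = (treeMap k l').1 → ∀ i, l.getD i true = l'.getD i true := by
  intro k l
  induction l generalizing k with
  | nil =>
    intro l' _ _ he i
    rw [treeMap_nil] at he
    simp only [List.getD_nil]
    by_contra hc
    have := fst_pos_of_false k i l' (by revert hc; cases l'.getD i true <;> simp)
    omega
  | cons a t ih =>
    intro l' h1 h2 he i
    cases l' with
    | nil =>
      rw [treeMap_nil] at he
      simp only [List.getD_nil]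
      by_contra hc
      have := fst_pos_of_false k i (a :: t) (by revert hc; cases (a::t).getD i true <;> simp)
      omega
    | cons a' t' =>
      have ht : t.length ≤ k - 1 := by simp at h1; omega
      have ht' : t'.length ≤ k - 1 := by simp at h2; omega
      rw [treeMap_cons, treeMap_cons] at he
      simp only at he
      have hy1 := treeMap_fst_lt (k-1) t ht
      have hy2 := treeMap_fst_lt (k-1) t' ht'
      have hm1 := treeMap_fst_nonneg (k-1) t
      have hm2 := treeMap_fst_nonneg (k-1) t'
      have haa : a = a' := by cases a <;> cases a' <;> simp_all <;> linarith
      subst haa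
      have heq : (treeMap (k-1) t).1 = (treeMap (k-1) t').1 := by
        cases a <;> simp_all
      cases i with
      | zero => simp
      | succ n => simpa using ih (k-1) t' ht ht' heq n

lemma eq_of_getD_eq {l l' : List Bool} (hlen : l.length = l'.length)
    (h : ∀ i, l.getD i false = l'.getD i false) : l = l' := by
  apply List.ext_getElem hlen
  intro i h1 h2
  have := h i
  rwa [List.getD_eq_getElem l false h1, List.getD_eq_getElem l' false h2] at this

lemma fst_shift (k : ℕ) (l l' : List Bool)
    (h : ∀ i, l.getD i false = l'.getD i false)
    (hm : l.length < l'.length) (hk : l'.length ≤ k) :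
    (treeMap k l').1 = (treeMap k l).1 + (2^(k - l.length) - 2^(k - l'.length)) := by
  set m := l.length
  set m' := l'.length
  have key : (treeMap k l').1 =
      (treeMap k l).1 + ∑ i ∈ Finset.Ico m m', (2:ℤ)^(k-1-i) := by
    unfold treeMap
    dsimp only
    rw [Finset.range_eq_Ico, Finset.range_eq_Ico,
      ← Finset.sum_Ico_consecutive _ (Nat.zero_le m) (le_of_lt hm)]
    congr 1
    · apply Finset.sum_congr rfl
      intro i hi
      rw [Finset.mem_Ico] at hi
      have hi1 : i < m := hi.2
      have hi2 : i < m' := by omega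
      have := h i
      rw [List.getD_eq_getElem l false hi1, List.getD_eq_getElem l' false hi2] at this
      rw [List.getD_eq_getElem l true hi1, List.getD_eq_getElem l' true hi2, this]
    · apply Finset.sum_congr rfl
      intro i hi
      rw [Finset.mem_Ico] at hi
      have hfalse : l'[i]'(hi.2) = false := by
        have := h i
        rw [List.getD_eq_default l false hi.1, List.getD_eq_getElem l' false hi.2] at this
        exact this.symm
      rw [List.getD_eq_getElem l' true hi.2, if_pos hfalse]
  rw [key]
  congr 1
  have h1 : (∑ i ∈ Finset.range m, (2:ℤ)^(k-1-i)) + ∑ i ∈ Finset.Ico m m', (2:ℤ)^(k-1-i)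
      = ∑ i ∈ Finset.range m', (2:ℤ)^(k-1-i) := by
    rw [Finset.range_eq_Ico, Finset.range_eq_Ico,
      Finset.sum_Ico_consecutive _ (Nat.zero_le m) (le_of_lt hm)]
  have h2 := sum_pows (show m ≤ k by omega)
  have h3 := sum_pows hk
  linarith

lemma snd_shift (k : ℕ) (l l' : List Bool)
    (h : ∀ i, l.getD i true = l'.getD i true)
    (hm : l.length < l'.length) (hk : l'.length ≤ k) :
    (treeMap k l').2 = (treeMap k l).2 + (2^(k - l.length) - 2^(k - l'.length)) := by
  set m := l.length
  set m' := l'.length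
  have key : (treeMap k l').2 =
      (treeMap k l).2 + ∑ i ∈ Finset.Ico m m', (2:ℤ)^(k-1-i) := by
    unfold treeMap
    dsimp only
    rw [Finset.range_eq_Ico, Finset.range_eq_Ico,
      ← Finset.sum_Ico_consecutive _ (Nat.zero_le m) (le_of_lt hm)]
    congr 1
    · apply Finset.sum_congr rfl
      intro i hi
      rw [Finset.mem_Ico] at hi
      have hi1 : i < m := hi.2
      have hi2 : i < m' := by omega
      have := h i
      rw [List.getD_eq_getElem l true hi1, List.getD_eq_getElem l' true hi2] at this
      rw [List.getD_eq_getElem l false hi1, List.getD_eq_getElem l' false hi2, this]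
    · apply Finset.sum_congr rfl
      intro i hi
      rw [Finset.mem_Ico] at hi
      have htrue : l'[i]'(hi.2) = true := by
        have := h i
        rw [List.getD_eq_default l true hi.1, List.getD_eq_getElem l' true hi.2] at this
        exact this.symm
      rw [List.getD_eq_getElem l' false hi.2, if_pos htrue]
  rw [key]
  congr 1
  have h1 : (∑ i ∈ Finset.range m, (2:ℤ)^(k-1-i)) + ∑ i ∈ Finset.Ico m m', (2:ℤ)^(k-1-i)
      = ∑ i ∈ Finset.range m', (2:ℤ)^(k-1-i) := by
    rw [Finset.range_eq_Ico, Finset.range_eq_Ico,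
      Finset.sum_Ico_consecutive _ (Nat.zero_le m) (le_of_lt hm)]
  have h2 := sum_pows (show m ≤ k by omega)
  have h3 := sum_pows hk
  linarith

lemma pow_half (k m : ℕ) (h : m < k) : (2:ℤ)^(k-m) = 2^(k-m-1) + 2^(k-m-1) := by
  have h1 : (2:ℤ)^(k-m-1) + 2^(k-m-1) = 2^((k-m-1)+1) := by rw [pow_succ]; ring
  rw [h1]; congr 1; omega

lemma horiz_main (k : ℕ) (l l' : List Bool) (hl : l.length < k) (hl' : l'.length < k)
    (hg : ∀ i, l.getD i false = l'.getD i false) (hm : l.length < l'.length)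
    (j j' : ℕ) (hj : j < 2^(k - l.length - 1)) (hj' : j' < 2^(k - l'.length - 1)) :
    (treeMap k l).1 + (j:ℤ) ≠ (treeMap k l').1 + (j':ℤ) := by
  have hs := fst_shift k l l' hg hm hl'.le
  have hjz : (j:ℤ) < 2^(k - l.length - 1) := by
    calc (j:ℤ) < ((2^(k - l.length - 1) : ℕ) : ℤ) := by exact_mod_cast hj
      _ = 2^(k - l.length - 1) := by push_cast; ring
  have hp1 : (2:ℤ)^(k - l'.length) ≤ 2^(k - l.length - 1) :=
    pow_le_pow_right₀ (by norm_num) (by omega)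
  have hp2 := pow_half k l.length hl
  have hj'0 : (0:ℤ) ≤ (j':ℤ) := Int.ofNat_nonneg j'
  intro he
  rw [hs] at he
  linarith

lemma vert_main (k : ℕ) (l l' : List Bool) (hl : l.length < k) (hl' : l'.length < k)
    (hg : ∀ i, l.getD i true = l'.getD i true) (hm : l.length < l'.length)
    (j j' : ℕ) (hj : j < 2^(k - l.length - 1)) (hj' : j' < 2^(k - l'.length - 1)) :
    (treeMap k l).2 + (j:ℤ) ≠ (treeMap k l').2 + (j':ℤ) := by
  have hs := snd_shift k l l' hg hm hl'.le
  have hjz : (j:ℤ) < 2^(k - l.length - 1) := by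
    calc (j:ℤ) < ((2^(k - l.length - 1) : ℕ) : ℤ) := by exact_mod_cast hj
      _ = 2^(k - l.length - 1) := by push_cast; ring
  have hp1 : (2:ℤ)^(k - l'.length) ≤ 2^(k - l.length - 1) :=
    pow_le_pow_right₀ (by norm_num) (by omega)
  have hp2 := pow_half k l.length hl
  have hj'0 : (0:ℤ) ≤ (j':ℤ) := Int.ofNat_nonneg j'
  intro he
  rw [hs] at he
  linarith

lemma eq_of_getD_eq' {l l' : List Bool} (hlen : l.length = l'.length)
    (h : ∀ i, l.getD i true = l'.getD i true) : l = l' := by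
  apply List.ext_getElem hlen
  intro i h1 h2
  have := h i
  rwa [List.getD_eq_getElem l true h1, List.getD_eq_getElem l' true h2] at this

lemma horiz_core (k : ℕ) (l l' : List Bool) (hl : l.length < k) (hl' : l'.length < k)
    (hne : l ≠ l') (hY : (treeMap k l).2 = (treeMap k l').2)
    (j j' : ℕ) (hj : j < 2^(k - l.length - 1)) (hj' : j' < 2^(k - l'.length - 1)) :
    (treeMap k l).1 + (j:ℤ) ≠ (treeMap k l').1 + (j':ℤ) := by
  have hg := snd_eq_getD k l l' hl.le hl'.le hY
  rcases lt_trichotomy l.length l'.length with hm | hm | hm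
  · exact horiz_main k l l' hl hl' hg hm j j' hj hj'
  · exact absurd (eq_of_getD_eq hm hg) hne
  · exact (horiz_main k l' l hl' hl (fun i => (hg i).symm) hm j' j hj' hj).symm

lemma vert_core (k : ℕ) (l l' : List Bool) (hl : l.length < k) (hl' : l'.length < k)
    (hne : l ≠ l') (hX : (treeMap k l).1 = (treeMap k l').1)
    (j j' : ℕ) (hj : j < 2^(k - l.length - 1)) (hj' : j' < 2^(k - l'.length - 1)) :
    (treeMap k l).2 + (j:ℤ) ≠ (treeMap k l').2 + (j':ℤ) := by
  have hg := fst_eq_getD k l l' hl.le hl'.le hX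
  rcases lt_trichotomy l.length l'.length with hm | hm | hm
  · exact vert_main k l l' hl hl' hg hm j j' hj hj'
  · exact absurd (eq_of_getD_eq' hm hg) hne
  · exact (vert_main k l' l hl' hl (fun i => (hg i).symm) hm j' j hj' hj).symm

/-- The set of lattice edges of the axis-parallel segment joining `ψ(v)` to `ψ(v·b)`:
horizontal for `b = false`, vertical for `b = true`; it has length `2^{k−|v|−1}`. -/
def treeSeg (k : ℕ) (l : List Bool) (b : Bool) : Set (Sym2 (ℤ × ℤ)) :=
  {e | ∃ j : ℕ, j < 2 ^ (k - l.length - 1) ∧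
    e = if b then
        s(((treeMap k l).1, (treeMap k l).2 + j), ((treeMap k l).1, (treeMap k l).2 + j + 1))
      else
        s(((treeMap k l).1 + j, (treeMap k l).2), ((treeMap k l).1 + j + 1, (treeMap k l).2))}

/-- the binary-tree wiring into `ℤ²` is a coarse `1`-wiring.
`treeMap` is injective on binary strings of length at most `k`; for `|v| < k` the segment
`treeSeg k v b` is an axis-parallel lattice segment from `ψ(v)` to `ψ(v·b)` (horizontal
for `b = 0`, vertical for `b = 1`); and distinct tree edges use disjoint sets of lattice
edges, i.e. each lattice edge lies on at most one segment. -/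
theorem binary_tree_wiring (k : ℕ) :
    (∀ l₁ l₂ : List Bool, l₁.length ≤ k → l₂.length ≤ k →
      treeMap k l₁ = treeMap k l₂ → l₁ = l₂) ∧
    (∀ (l : List Bool) (b : Bool), l.length < k →
      treeMap k (l ++ [b]) =
        if b then ((treeMap k l).1, (treeMap k l).2 + 2 ^ (k - l.length - 1))
        else ((treeMap k l).1 + 2 ^ (k - l.length - 1), (treeMap k l).2)) ∧
    (∀ (l l' : List Bool) (b b' : Bool), l.length < k → l'.length < k →
      (l, b) ≠ (l', b') → Disjoint (treeSeg k l b) (treeSeg k l' b')) := by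
  refine ⟨treeMap_inj k, fun l b h => treeMap_append k l b h, ?_⟩
  intro l l' b b' hl hl' hne
  rw [Set.disjoint_left]
  rintro e ⟨j, hj, rfl⟩ ⟨j', hj', he⟩
  cases b <;> cases b' <;>
    simp only [if_true, if_false, Bool.false_eq_true, Sym2.eq_iff, Prod.mk.injEq] at he
  · -- both horizontal
    have hll' : l ≠ l' := fun h => hne (by rw [h])
    have hY : (treeMap k l).2 = (treeMap k l').2 := by omega
    have hX : (treeMap k l).1 + (j:ℤ) = (treeMap k l').1 + (j':ℤ) := by omega
    exact horiz_core k l l' hl hl' hll' hY j j' hj hj' hX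
  · omega
  · omega
  · -- both vertical
    have hll' : l ≠ l' := fun h => hne (by rw [h])
    have hX : (treeMap k l).1 = (treeMap k l').1 := by omega
    have hY : (treeMap k l).2 + (j:ℤ) = (treeMap k l').2 + (j':ℤ) := by omega
    exact vert_core k l l' hl hl' hll' hX j j' hj hj' hY
end

section
/- Let Q^1_r be the path graph on r vertices and Q^n_r the n-fold graph product Q^1_r × ⋯ × Q^1_r (the n-dimensional grid graph). For all n ≥ 2 and k there exists an integer C = C(n,k) > 0 such that: for every finite graph Γ with all degrees at most k, setting R = ⌈|VΓ|^{1/(n−1)}⌉, there is a coarse (k+n)-wiring of Γ into Q^n_{2CR}. -/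
open SimpleGraph

/-- The `n`-dimensional grid graph `Q^n_r`, the `n`-fold graph product of the path graph
on `r` vertices: vertices are `{0,…,r-1}^n`, with edges between points at
`L¹`-distance `1`. -/
def gridGraph (n r : ℕ) : SimpleGraph (Fin n → Fin r) :=
  SimpleGraph.fromRel (fun p q => ∑ i, ((p i : ℤ) - (q i : ℤ)).natAbs = 1)

section KBGrid

open Function SimpleGraph

variable {n s : ℕ}

private lemma KB.sum_natAbs_update (x : Fin n → Fin s) (i : Fin n) (a b : Fin s) :
    (∑ j, (((Function.update x i a) j : ℤ) - ((Function.update x i b) j : ℤ)).natAbs)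
      = ((a : ℤ) - (b : ℤ)).natAbs := by
  rw [Fintype.sum_eq_single i]
  · simp
  · intro j hj
    simp [Function.update_of_ne hj]

private lemma KB.adj_update (x : Fin n → Fin s) (i : Fin n) {a b : Fin s}
    (hab : ((a : ℤ) - (b : ℤ)).natAbs = 1) :
    (gridGraph n s).Adj (Function.update x i a) (Function.update x i b) := by
  have hne : a ≠ b := by
    intro h; subst h; simp at hab
  refine (SimpleGraph.fromRel_adj _ _ _).2 ⟨?_, Or.inl ?_⟩
  · intro h
    exact hne (by simpa using congrFun h i)
  · rw [KB.sum_natAbs_update]; exact hab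

private lemma KB.update_mk_eq' (x : Fin n → Fin s) (i : Fin n) (v w : ℕ)
    (hv : v < s) (hw : w < s) (h : v = w) :
    Function.update x i ⟨v, hv⟩ = Function.update x i ⟨w, hw⟩ := by
  subst h; rfl

private lemma KB.update_mk_eq (x : Fin n → Fin s) (i : Fin n) (a : Fin s) (v : ℕ)
    (hv : v < s) (h : v = (a : ℕ)) :
    Function.update x i ⟨v, hv⟩ = Function.update x i a := by
  subst h
  exact congrArg _ (Fin.eta a hv)

/-- A straight walk in the grid increasing one coordinate. -/
def KB.upWalk (x : Fin n → Fin s) (i : Fin n) :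
    (a d : ℕ) → (h : a + d < s) →
      (gridGraph n s).Walk (Function.update x i ⟨a, by omega⟩) (Function.update x i ⟨a + d, h⟩)
  | a, 0, h => SimpleGraph.Walk.nil.copy rfl (by congr 1)
  | a, d + 1, h =>
      SimpleGraph.Walk.cons
        (KB.adj_update x i (a := ⟨a, by omega⟩) (b := ⟨a + 1, by omega⟩)
          (by simp))
        ((KB.upWalk x i (a + 1) d (by omega)).copy rfl (KB.update_mk_eq' x i _ _ (by omega) h (by omega)))

lemma KB.upWalk_edges (x : Fin n → Fin s) (i : Fin n) :
    ∀ (a d : ℕ) (h : a + d < s) (ε : Sym2 (Fin n → Fin s)),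
      ε ∈ (KB.upWalk x i a d h).edges →
      ∃ c c' : Fin s, ε = s(Function.update x i c, Function.update x i c')
  | a, 0, h, ε => by
    intro hε
    simp [KB.upWalk, SimpleGraph.Walk.edges_copy] at hε
  | a, d + 1, h, ε => by
    intro hε
    rw [KB.upWalk] at hε
    simp only [SimpleGraph.Walk.edges_cons, SimpleGraph.Walk.edges_copy, List.mem_cons] at hε
    rcases hε with hε | hε
    · exact ⟨_, _, hε⟩
    · exact KB.upWalk_edges x i (a + 1) d (by omega) ε hε

/-- A straight walk between two updates of the same point. -/
def KB.lineWalk (x : Fin n → Fin s) (i : Fin n) (a b : Fin s) :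
    (gridGraph n s).Walk (Function.update x i a) (Function.update x i b) :=
  if h : (a : ℕ) ≤ (b : ℕ) then
    (KB.upWalk x i (a : ℕ) ((b : ℕ) - (a : ℕ)) (by have := b.isLt; omega)).copy
      (KB.update_mk_eq x i a _ _ rfl) (KB.update_mk_eq x i b _ _ (by omega))
  else
    ((KB.upWalk x i (b : ℕ) ((a : ℕ) - (b : ℕ)) (by have := a.isLt; omega)).copy
      (KB.update_mk_eq x i b _ _ rfl) (KB.update_mk_eq x i a _ _ (by omega))).reverse

lemma KB.lineWalk_edges (x : Fin n → Fin s) (i : Fin n) (a b : Fin s)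
    (ε : Sym2 (Fin n → Fin s)) (hε : ε ∈ (KB.lineWalk x i a b).edges) :
    ∃ c c' : Fin s, ε = s(Function.update x i c, Function.update x i c') := by
  rw [KB.lineWalk] at hε
  split_ifs at hε with h
  · rw [SimpleGraph.Walk.edges_copy] at hε
    exact KB.upWalk_edges x i _ _ _ ε hε
  · rw [SimpleGraph.Walk.edges_reverse, List.mem_reverse, SimpleGraph.Walk.edges_copy] at hε
    exact KB.upWalk_edges x i _ _ _ ε hε

/-- A staircase walk from `p` to `q`, adjusting coordinates `t-1, t-2, …, 0` in
that order (coordinates `≥ t` must already agree). -/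
def KB.zig : (t : ℕ) → (p q : Fin n → Fin s) →
    (hpq : ∀ i : Fin n, t ≤ (i : ℕ) → p i = q i) → (gridGraph n s).Walk p q
  | 0, p, q, hpq => SimpleGraph.Walk.nil.copy rfl (funext fun i => hpq i (Nat.zero_le _))
  | t + 1, p, q, hpq =>
      if ht : t < n then
        ((KB.lineWalk p ⟨t, ht⟩ (p ⟨t, ht⟩) (q ⟨t, ht⟩)).copy
            (Function.update_eq_self _ _) rfl).append
          (KB.zig t (Function.update p ⟨t, ht⟩ (q ⟨t, ht⟩)) q (by
            intro i hi
            rcases eq_or_ne i ⟨t, ht⟩ with rfl | hne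
            · simp
            · rw [Function.update_of_ne hne]
              exact hpq i (by
                have : (i : ℕ) ≠ t := fun hc => hne (Fin.ext hc)
                omega)))
      else
        KB.zig t p q (fun i hi => hpq i (by have := i.isLt; omega))

lemma KB.zig_edges : ∀ (t : ℕ) (p q : Fin n → Fin s) (hpq) (ε : Sym2 (Fin n → Fin s)),
    ε ∈ (KB.zig t p q hpq).edges →
    ∃ (d : ℕ) (hd : d < n), d < t ∧ ∃ (c c' : Fin s),
      ε = s(Function.update (fun i : Fin n => if (i : ℕ) < d then p i else q i) ⟨d, hd⟩ c,
            Function.update (fun i : Fin n => if (i : ℕ) < d then p i else q i) ⟨d, hd⟩ c')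
  | 0, p, q, hpq, ε => by
    intro hε
    simp [KB.zig, SimpleGraph.Walk.edges_copy] at hε
  | t + 1, p, q, hpq, ε => by
    intro hε
    rw [KB.zig] at hε
    split_ifs at hε with ht
    · rw [SimpleGraph.Walk.edges_append, List.mem_append] at hε
      rcases hε with hε | hε
      · rw [SimpleGraph.Walk.edges_copy] at hε
        obtain ⟨c, c', hcc⟩ := KB.lineWalk_edges _ _ _ _ ε hε
        refine ⟨t, ht, by omega, c, c', ?_⟩
        have hbase : ∀ cc : Fin s, Function.update p ⟨t, ht⟩ cc
            = Function.update (fun i : Fin n => if (i : ℕ) < t then p i else q i) ⟨t, ht⟩ cc := by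
          intro cc
          funext i
          rcases eq_or_ne i ⟨t, ht⟩ with rfl | hne
          · simp
          · rw [Function.update_of_ne hne, Function.update_of_ne hne]
            have hit : (i : ℕ) ≠ t := fun hc => hne (Fin.ext hc)
            by_cases hlt : (i : ℕ) < t
            · rw [if_pos hlt]
            · rw [if_neg hlt]
              exact hpq i (by omega)
        rw [hcc, hbase c, hbase c']
      · obtain ⟨d, hd, hdt, c, c', hcc⟩ := KB.zig_edges t _ q _ ε hε
        refine ⟨d, hd, by omega, c, c', ?_⟩
        have hmix : (fun i : Fin n => if (i : ℕ) < d then Function.update p ⟨t, ht⟩ (q ⟨t, ht⟩) i else q i)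
            = (fun i : Fin n => if (i : ℕ) < d then p i else q i) := by
          funext i
          by_cases hlt : (i : ℕ) < d
          · rw [if_pos hlt, if_pos hlt, Function.update_of_ne]
            intro hc
            rw [hc] at hlt
            simp at hlt
            omega
          · rw [if_neg hlt, if_neg hlt]
        rw [hcc, hmix]
    · obtain ⟨d, hd, hdt, c, c', hcc⟩ := KB.zig_edges t p q _ ε hε
      exact ⟨d, hd, by omega, c, c', hcc⟩

end KBGrid


section KBSep

open Function Finset SimpleGraph

variable {n s : ℕ}

/-- If two single-coordinate-move unordered pairs of grid points coincide, then the moving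
coordinates coincide and so do all the other coordinates of the base points. -/
lemma KB.update_pair_eq {f g : Fin n → Fin s} {d e : Fin n} {c c' cc cc' : Fin s}
    (hc : c ≠ c')
    (heq : s(Function.update f d c, Function.update f d c')
         = s(Function.update g e cc, Function.update g e cc')) :
    d = e ∧ ∀ i, i ≠ d → f i = g i := by
  rw [Sym2.eq_iff] at heq
  have main : ∀ (b b' : Fin s),
      Function.update f d c = Function.update g e b →
      Function.update f d c' = Function.update g e b' →
      d = e ∧ ∀ i, i ≠ d → f i = g i := by
    intro b b' h1 h2
    rcases eq_or_ne d e with rfl | hde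
    · refine ⟨rfl, fun i hi => ?_⟩
      have h3 := congrFun h1 i
      rwa [Function.update_of_ne hi, Function.update_of_ne hi] at h3
    · exfalso
      have e1 := congrFun h1 d
      have e2 := congrFun h2 d
      rw [Function.update_self, Function.update_of_ne hde] at e1
      rw [Function.update_self, Function.update_of_ne hde] at e2
      exact hc (e1.trans e2.symm)
  rcases heq with ⟨h1, h2⟩ | ⟨h1, h2⟩
  · exact main cc cc' h1 h2
  · exact main cc' cc h1 h2

/-- The separation property of a waypoint assignment. -/
def KB.Sep {V : Type} (n s : ℕ) (X : V → Fin n → Fin s)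
    (F : Set (Sym2 V)) (H : Sym2 V → Fin n → Fin s) : Prop :=
  ∀ e ∈ F, ∀ e' ∈ F, e ≠ e' → ∀ w w' : V, w ∈ e → w' ∈ e' → ∀ d : ℕ, d < n - 1 →
    (∀ i : Fin n, (i : ℕ) < d → X w i = X w' i) →
    ¬(∀ i : Fin n, d < (i : ℕ) → H e i = H e' i)

lemma KB.exists_sep (n k m s : ℕ) (hn : 2 ≤ n) (hm : 1 ≤ m)
    (hsdef : s = 2 * (n * (k + 1)) * m) {V : Type} [Fintype V]
    (Γ : SimpleGraph V) (X : V → Fin n → Fin s)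
    (hdeg : ∀ v : V, (Γ.neighborSet v).ncard ≤ k)
    (hbox : ∀ (w : V) (d : ℕ), d < n - 1 →
      {v : V | ∀ i : Fin n, (i : ℕ) < d → X v i = X w i}.ncard ≤ m ^ (n - 1 - d)) :
    ∃ H : Sym2 V → Fin n → Fin s,
      KB.Sep n s X Γ.edgeSet H := by
  classical
  set C : ℕ := n * (k + 1) with hC
  have hCpos : 0 < C := Nat.mul_pos (by omega) (Nat.succ_pos k)
  have hspos : 0 < s := by rw [hsdef]; exact Nat.mul_pos (Nat.mul_pos (by omega) hCpos) hm
  have hdegF : ∀ v : V, Γ.degree v ≤ k := by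
    intro v
    have h1 : Γ.degree v = (Γ.neighborSet v).ncard := by
      rw [SimpleGraph.degree, Set.ncard_eq_toFinset_card']
      rfl
    rw [h1]; exact hdeg v
  have hboxF : ∀ (w : V) (d : ℕ), d < n - 1 →
      (Finset.univ.filter (fun v : V => ∀ i : Fin n, (i : ℕ) < d → X v i = X w i)).card
        ≤ m ^ (n - 1 - d) := by
    intro w d hd
    have h1 := hbox w d hd
    rwa [Set.ncard_eq_toFinset_card', Set.toFinset_setOf] at h1
  suffices hF : ∀ F : Finset (Sym2 V), ↑F ⊆ Γ.edgeSet →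
      ∃ H : Sym2 V → Fin n → Fin s, KB.Sep n s X (↑F) H by
    obtain ⟨H, hH⟩ := hF Γ.edgeSet.toFinset (by simp)
    refine ⟨H, ?_⟩
    rw [← Set.coe_toFinset Γ.edgeSet]
    exact hH
  intro F
  induction F using Finset.induction_on with
  | empty =>
    intro _
    exact ⟨fun _ _ => ⟨0, hspos⟩, by intro e he; simp at he⟩
  | @insert e₀ F he₀F ih =>
    intro hsub
    have hFsub : ↑F ⊆ Γ.edgeSet := fun x hx => hsub (by simp [hx])
    have he₀E : e₀ ∈ Γ.edgeSet := hsub (by simp)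
    obtain ⟨H, hH⟩ := ih hFsub
    -- the finset of (edge, endpoint) pairs of `F` matching the length-`d` prefix of `w`
    set mass : V → ℕ → Finset (Sym2 V × V) := fun w d =>
      (F ×ˢ Finset.univ).filter
        (fun p => p.2 ∈ p.1 ∧ ∀ i : Fin n, (i : ℕ) < d → X p.2 i = X w i) with hmass
    have hmasscard : ∀ (w : V) (d : ℕ), d < n - 1 → (mass w d).card ≤ k * m ^ (n - 1 - d) := by
      intro w d hd
      set box : Finset V :=
        Finset.univ.filter (fun v : V => ∀ i : Fin n, (i : ℕ) < d → X v i = X w i) with hbox'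
      have hsubset : mass w d ⊆ box.biUnion
          (fun v => (Γ.incidenceFinset v).image (fun e => (e, v))) := by
        intro p hp
        rw [hmass, Finset.mem_filter, Finset.mem_product] at hp
        obtain ⟨⟨hpF, -⟩, hpmem, hppre⟩ := hp
        rw [Finset.mem_biUnion]
        refine ⟨p.2, by rw [hbox']; simp only [Finset.mem_filter]; exact ⟨Finset.mem_univ _, hppre⟩, ?_⟩
        rw [Finset.mem_image]
        refine ⟨p.1, ?_, rfl⟩
        rw [SimpleGraph.mem_incidenceFinset]
        exact ⟨hFsub hpF, hpmem⟩
      calc (mass w d).card ≤ _ := Finset.card_le_card hsubset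
        _ ≤ ∑ v ∈ box, ((Γ.incidenceFinset v).image (fun e => (e, v))).card :=
            Finset.card_biUnion_le
        _ ≤ ∑ v ∈ box, k := by
            refine Finset.sum_le_sum fun v _ => ?_
            calc ((Γ.incidenceFinset v).image (fun e => (e, v))).card
                ≤ (Γ.incidenceFinset v).card := Finset.card_image_le
              _ = Γ.degree v := Γ.card_incidenceFinset_eq_degree v
              _ ≤ k := hdegF v
        _ = box.card * k := by rw [Finset.sum_const, smul_eq_mul]
        _ ≤ m ^ (n - 1 - d) * k := Nat.mul_le_mul_right k (hboxF w d hd)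
        _ = k * m ^ (n - 1 - d) := Nat.mul_comm _ _
    have hinner : ∀ (g : Fin n → Fin s) (d : ℕ), d < n - 1 →
        (Finset.univ.filter
          (fun h : Fin n → Fin s => ∀ i : Fin n, d < (i : ℕ) → h i = g i)).card
          ≤ s ^ (d + 1) := by
      intro g d hd
      have hdn : d + 1 ≤ n := by omega
      have hcard : ((Finset.univ : Finset (Fin (d + 1) → Fin s))).card = s ^ (d + 1) := by
        rw [Finset.card_univ, Fintype.card_fun, Fintype.card_fin, Fintype.card_fin]
      rw [← hcard]
      apply Finset.card_le_card_of_injOn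
        (fun h => fun j : Fin (d + 1) => h ⟨(j : ℕ), by omega⟩)
      · intro h _; exact Finset.mem_univ _
      · intro h₁ hm₁ h₂ hm₂ himg
        rw [Finset.mem_coe, Finset.mem_filter] at hm₁ hm₂
        funext i
        by_cases hi : (i : ℕ) < d + 1
        · have h3 := congrFun himg ⟨(i : ℕ), hi⟩
          simpa [Fin.eta] using h3
        · rw [hm₁.2 i (by omega), hm₂.2 i (by omega)]
    -- blocked waypoint vectors
    set blocked : Finset (Fin n → Fin s) :=
      (Finset.univ.filter (· ∈ e₀)).biUnion fun w =>
        (Finset.range (n - 1)).biUnion fun d =>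
          (mass w d).biUnion fun p =>
            Finset.univ.filter fun h : Fin n → Fin s =>
              ∀ i : Fin n, d < (i : ℕ) → h i = H p.1 i
      with hblocked
    set B : ℕ := k * ((2 * C) ^ (n - 1) * m ^ n) with hB
    have hthird : ∀ (w : V) (d : ℕ), d ∈ Finset.range (n - 1) →
        ((mass w d).biUnion fun p =>
            Finset.univ.filter fun h : Fin n → Fin s =>
              ∀ i : Fin n, d < (i : ℕ) → h i = H p.1 i).card ≤ B := by
      intro w d hd
      rw [Finset.mem_range] at hd
      calc ((mass w d).biUnion _).card
          ≤ ∑ p ∈ mass w d, (Finset.univ.filter fun h : Fin n → Fin s =>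
              ∀ i : Fin n, d < (i : ℕ) → h i = H p.1 i).card := Finset.card_biUnion_le
        _ ≤ ∑ _p ∈ mass w d, s ^ (d + 1) :=
            Finset.sum_le_sum fun p _ => hinner (H p.1) d hd
        _ = (mass w d).card * s ^ (d + 1) := by rw [Finset.sum_const, smul_eq_mul]
        _ ≤ (k * m ^ (n - 1 - d)) * s ^ (d + 1) :=
            Nat.mul_le_mul_right _ (hmasscard w d hd)
        _ = k * (m ^ (n - 1 - d) * ((2 * C) ^ (d + 1) * m ^ (d + 1))) := by
            rw [hsdef, mul_pow]; ring
        _ = k * ((2 * C) ^ (d + 1) * m ^ ((n - 1 - d) + (d + 1))) := by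
            rw [pow_add]; ring
        _ = k * ((2 * C) ^ (d + 1) * m ^ n) := by
            congr 3
            omega
        _ ≤ B := by
            rw [hB]
            exact Nat.mul_le_mul_left k (Nat.mul_le_mul_right _
              (Nat.pow_le_pow_right (by omega) (by omega)))
    have hsides : (Finset.univ.filter (· ∈ e₀)).card ≤ 2 := by
      obtain ⟨⟨a, b⟩, hab⟩ := Quot.exists_rep e₀
      have hsub2 : (Finset.univ.filter (· ∈ e₀)) ⊆ {a, b} := by
        intro x hx
        rw [Finset.mem_filter] at hx
        have hx2 := hx.2
        rw [← hab] at hx2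
        have : x = a ∨ x = b := Sym2.mem_iff.1 hx2
        simpa using this
      calc (Finset.univ.filter (· ∈ e₀)).card ≤ ({a, b} : Finset V).card :=
            Finset.card_le_card hsub2
        _ ≤ 2 := Finset.card_insert_le _ _ |>.trans (by simp)
    have hblockedcard : blocked.card < s ^ n := by
      have h1 : blocked.card ≤ 2 * ((n - 1) * B) := by
        calc blocked.card
            ≤ ∑ w ∈ Finset.univ.filter (· ∈ e₀),
                ((Finset.range (n - 1)).biUnion fun d =>
                  (mass w d).biUnion fun p =>
                    Finset.univ.filter fun h : Fin n → Fin s =>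
                      ∀ i : Fin n, d < (i : ℕ) → h i = H p.1 i).card :=
              Finset.card_biUnion_le
          _ ≤ ∑ _w ∈ Finset.univ.filter (· ∈ e₀), (n - 1) * B := by
              refine Finset.sum_le_sum fun w _ => ?_
              calc ((Finset.range (n - 1)).biUnion _).card
                  ≤ ∑ d ∈ Finset.range (n - 1), ((mass w d).biUnion fun p =>
                      Finset.univ.filter fun h : Fin n → Fin s =>
                        ∀ i : Fin n, d < (i : ℕ) → h i = H p.1 i).card :=
                    Finset.card_biUnion_le
                _ ≤ ∑ d ∈ Finset.range (n - 1), B :=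
                    Finset.sum_le_sum fun d hd => hthird w d hd
                _ = (n - 1) * B := by rw [Finset.sum_const, smul_eq_mul, Finset.card_range]
          _ = (Finset.univ.filter (· ∈ e₀)).card * ((n - 1) * B) := by
              rw [Finset.sum_const, smul_eq_mul]
          _ ≤ 2 * ((n - 1) * B) := Nat.mul_le_mul_right _ hsides
      have h2 : 2 * ((n - 1) * B) < s ^ n := by
        have hlt : 2 * ((n - 1) * k) < 2 * C := by
          have : (n - 1) * k < C := by
            rw [hC]
            calc (n - 1) * k ≤ n * k := Nat.mul_le_mul_right k (by omega)
              _ < n * k + n := by omega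
              _ = n * (k + 1) := by ring
          omega
        have hsn : s ^ n = (2 * C) * ((2 * C) ^ (n - 1) * m ^ n) := by
          rw [hsdef, mul_pow]
          have hn1 : n = (n - 1) + 1 := by omega
          calc (2 * C) ^ n * m ^ n = (2 * C) ^ ((n - 1) + 1) * m ^ n := by rw [← hn1]
            _ = (2 * C) * ((2 * C) ^ (n - 1) * m ^ n) := by rw [pow_succ]; ring
        have h3 : 2 * ((n - 1) * B) = (2 * ((n - 1) * k)) * ((2 * C) ^ (n - 1) * m ^ n) := by
          rw [hB]; ring
        rw [hsn, h3]
        have hpos : 0 < (2 * C) ^ (n - 1) * m ^ n :=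
          Nat.mul_pos (Nat.pow_pos (by omega)) (Nat.pow_pos hm)
        exact Nat.mul_lt_mul_of_lt_of_le hlt (le_refl _) hpos
      exact lt_of_le_of_lt h1 h2
    have hfree : ∃ h : Fin n → Fin s, h ∉ blocked := by
      by_contra hcon
      push_neg at hcon
      have : (Finset.univ : Finset (Fin n → Fin s)).card ≤ blocked.card :=
        Finset.card_le_card fun h _ => hcon h
      rw [Finset.card_univ, Fintype.card_fun, Fintype.card_fin, Fintype.card_fin] at this
      omega
    obtain ⟨hnew, hhnew⟩ := hfree
    refine ⟨Function.update H e₀ hnew, ?_⟩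
    intro e he e' he' hne w w' hw hw' d hd hpre hsuf
    rw [Finset.coe_insert, Set.mem_insert_iff] at he he'
    have hblock : ∀ (ee : Sym2 V) (ww ww' : V), ee ∈ F → ww ∈ e₀ → ww' ∈ ee →
        (∀ i : Fin n, (i : ℕ) < d → X ww' i = X ww i) →
        (∀ i : Fin n, d < (i : ℕ) → hnew i = H ee i) → False := by
      intro ee ww ww' heeF hww hww' hpre' hsuf'
      apply hhnew
      rw [hblocked, Finset.mem_biUnion]
      refine ⟨ww, by simp [hww], ?_⟩
      rw [Finset.mem_biUnion]
      refine ⟨d, Finset.mem_range.2 hd, ?_⟩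
      rw [Finset.mem_biUnion]
      refine ⟨(ee, ww'), ?_, ?_⟩
      · rw [hmass, Finset.mem_filter, Finset.mem_product]
        exact ⟨⟨heeF, Finset.mem_univ _⟩, hww', hpre'⟩
      · rw [Finset.mem_filter]
        exact ⟨Finset.mem_univ _, hsuf'⟩
    rcases he with rfl | heF
    · rcases he' with rfl | he'F
      · exact hne rfl
      · -- e = e₀, e' ∈ F
        have hne' : e' ≠ e := fun hc => hne hc.symm
        refine hblock e' w w' he'F hw hw' (fun i hi => (hpre i hi).symm) (fun i hi => ?_)
        have h4 := hsuf i hi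
        rwa [Function.update_self, Function.update_of_ne (fun hc => he₀F (by rw [← hc]; exact he'F))] at h4
    · rcases he' with rfl | he'F
      · -- e ∈ F, e' = e₀
        refine hblock e w' w heF hw' hw (fun i hi => hpre i hi) (fun i hi => ?_)
        have h4 := hsuf i hi
        rw [Function.update_self, Function.update_of_ne (fun hc => he₀F (by rw [← hc]; exact heF))] at h4
        exact h4.symm
      · -- both in F
        refine hH e heF e' he'F hne w w' hw hw' d hd hpre (fun i hi => ?_)
        have h4 := hsuf i hi
        rwa [Function.update_of_ne (fun hc => he₀F (by rw [← hc]; exact heF)),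
          Function.update_of_ne (fun hc => he₀F (by rw [← hc]; exact he'F))] at h4

end KBSep


section KBRoute

open Function SimpleGraph

/-- The intermediate corner of the route of the edge `{u,v}`. -/
def KB.mid {V : Type} (n s : ℕ) (X : V → Fin n → Fin s) (H : Sym2 V → Fin n → Fin s)
    (u v : V) : Fin n → Fin s :=
  fun i => if (i : ℕ) < 1 then X v i else H s(u, v) i

/-- The route of the edge `{u,v}` in the grid. -/
def KB.route {V : Type} (n s : ℕ) (X : V → Fin n → Fin s) (H : Sym2 V → Fin n → Fin s)
    (u v : V) : (gridGraph n s).Walk (X u) (X v) :=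
  (KB.zig n (X u) (KB.mid n s X H u v) (fun i hi => absurd i.isLt (by omega))).append
    ((KB.zig n (X v) (KB.mid n s X H u v) (fun i hi => absurd i.isLt (by omega))).reverse)

lemma KB.route_edges {V : Type} {n s : ℕ} (X : V → Fin n → Fin s)
    (H : Sym2 V → Fin n → Fin s) (u v : V) (ε : Sym2 (Fin n → Fin s))
    (hε : ε ∈ (KB.route n s X H u v).edges) :
    ∃ w : V, (w = u ∨ w = v) ∧ ∃ (d : ℕ) (hd : d < n) (c c' : Fin s), c ≠ c' ∧
      ε = s(Function.update
              (fun i : Fin n => if (i : ℕ) < d then X w i else H s(u, v) i) ⟨d, hd⟩ c,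
            Function.update
              (fun i : Fin n => if (i : ℕ) < d then X w i else H s(u, v) i) ⟨d, hd⟩ c') := by
  rw [KB.route, SimpleGraph.Walk.edges_append, List.mem_append] at hε
  have hgen : ∀ (w : V), (w = u ∨ w = v) →
      ∀ (hpq : ∀ i : Fin n, n ≤ (i : ℕ) → X w i = KB.mid n s X H u v i),
      ε ∈ (KB.zig n (X w) (KB.mid n s X H u v) hpq).edges →
      ∃ w' : V, (w' = u ∨ w' = v) ∧ ∃ (d : ℕ) (hd : d < n) (c c' : Fin s), c ≠ c' ∧
        ε = s(Function.update
                (fun i : Fin n => if (i : ℕ) < d then X w' i else H s(u, v) i) ⟨d, hd⟩ c,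
              Function.update
                (fun i : Fin n => if (i : ℕ) < d then X w' i else H s(u, v) i) ⟨d, hd⟩ c') := by
    intro w hwor hpq hε'
    obtain ⟨d, hd, hdt, c, c', hrep⟩ := KB.zig_edges n (X w) (KB.mid n s X H u v) hpq ε hε'
    refine ⟨w, hwor, d, hd, c, c', ?_, ?_⟩
    · intro hcc
      have hdiag : ε ∈ (gridGraph n s).edgeSet :=
        SimpleGraph.Walk.edges_subset_edgeSet _ hε'
      rw [hrep, hcc] at hdiag
      exact (SimpleGraph.not_isDiag_of_mem_edgeSet _ hdiag) (Sym2.mk_isDiag_iff.2 rfl)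
    · rw [hrep]
      have hupd : ∀ cc : Fin s,
          Function.update
            (fun i : Fin n => if (i : ℕ) < d then X w i else KB.mid n s X H u v i) ⟨d, hd⟩ cc
          = Function.update
            (fun i : Fin n => if (i : ℕ) < d then X w i else H s(u, v) i) ⟨d, hd⟩ cc := by
        intro cc
        funext i
        rcases eq_or_ne i ⟨d, hd⟩ with rfl | hne
        · simp
        · rw [Function.update_of_ne hne, Function.update_of_ne hne]
          have hid : (i : ℕ) ≠ d := fun hcon => hne (Fin.ext hcon)
          by_cases hlt : (i : ℕ) < d
          · rw [if_pos hlt, if_pos hlt]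
          · rw [if_neg hlt, if_neg hlt]
            simp only [KB.mid]
            rw [if_neg (by omega)]
      rw [hupd c, hupd c']
  rcases hε with hε | hε
  · exact hgen u (Or.inl rfl) _ hε
  · rw [SimpleGraph.Walk.edges_reverse, List.mem_reverse] at hε
    exact hgen v (Or.inr rfl) _ hε

end KBRoute


/-- higher-dimensional Kolmogorov–Barzdin theorem.
For all `n ≥ 2` and `k` there is `C = C(n,k) > 0` such that every finite graph `Γ` with
all degrees at most `k` admits a coarse `(k+n)`-wiring into `Q^n_{2CR}`, where
`R = ⌈|VΓ|^{1/(n-1)}⌉`. -/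
theorem kolmogorov_barzdin (n k : ℕ) (hn : 2 ≤ n) :
    ∃ C : ℕ, 0 < C ∧ ∀ (V : Type) [Fintype V] (Γ : SimpleGraph V),
      (∀ v : V, (Γ.neighborSet v).ncard ≤ k) →
      Nonempty (CoarseWiring Γ
        (gridGraph n (2 * C * ⌈(Fintype.card V : ℝ) ^ ((1 : ℝ) / (n - 1))⌉₊)) (k + n)) := by
  classical
  refine ⟨n * (k + 1), Nat.mul_pos (by omega) (Nat.succ_pos k), ?_⟩
  intro V _ Γ hdeg
  by_cases hVcard : Fintype.card V = 0
  · haveI hVe : IsEmpty V := Fintype.card_eq_zero_iff.1 hVcard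
    haveI : IsEmpty (Sym2 V) := ⟨fun e => isEmptyElim (Quot.out e).1⟩
    refine ⟨⟨isEmptyElim, fun u => isEmptyElim u, fun u => isEmptyElim u, fun w => ?_,
      fun e => ?_⟩⟩
    · refine le_trans (Set.ncard_le_ncard (Set.subset_univ _) Set.finite_univ) ?_
      rw [Set.ncard_univ, Nat.card_of_isEmpty]
      exact Nat.zero_le _
    · refine le_trans (Set.ncard_le_ncard (Set.subset_univ _) Set.finite_univ) ?_
      rw [Set.ncard_univ, Nat.card_of_isEmpty]
      exact Nat.zero_le _
  · have hNpos : 0 < Fintype.card V := Nat.pos_of_ne_zero hVcard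
    set m : ℕ := ⌈(Fintype.card V : ℝ) ^ ((1 : ℝ) / (n - 1))⌉₊ with hmdef
    have hexp : (0 : ℝ) < (n : ℝ) - 1 := by
      have h2 : (2 : ℝ) ≤ (n : ℝ) := by exact_mod_cast hn
      linarith
    have hmN : Fintype.card V ≤ m ^ (n - 1) := by
      have hle : (Fintype.card V : ℝ) ^ ((1 : ℝ) / ((n : ℝ) - 1)) ≤ (m : ℝ) := Nat.le_ceil _
      have h2 : ((Fintype.card V : ℝ) ^ ((1 : ℝ) / ((n : ℝ) - 1))) ^ ((n : ℝ) - 1)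
          ≤ (m : ℝ) ^ ((n : ℝ) - 1) :=
        Real.rpow_le_rpow (Real.rpow_nonneg (Nat.cast_nonneg _) _) hle hexp.le
      have h3 : ((Fintype.card V : ℝ) ^ ((1 : ℝ) / ((n : ℝ) - 1))) ^ ((n : ℝ) - 1)
          = (Fintype.card V : ℝ) := by
        rw [← Real.rpow_mul (Nat.cast_nonneg _), one_div_mul_cancel hexp.ne', Real.rpow_one]
      have h4 : (m : ℝ) ^ ((n : ℝ) - 1) = ((m ^ (n - 1) : ℕ) : ℝ) := by
        have h5 : ((n : ℝ) - 1) = ((n - 1 : ℕ) : ℝ) := by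
          rw [Nat.cast_sub (by omega : 1 ≤ n), Nat.cast_one]
        rw [h5, Real.rpow_natCast]
        push_cast
        ring
      rw [h3, h4] at h2
      exact_mod_cast h2
    have hm1 : 1 ≤ m := by
      rcases Nat.eq_zero_or_pos m with h0 | h
      · rw [h0, zero_pow (by omega : n - 1 ≠ 0)] at hmN
        omega
      · exact h
    set s : ℕ := 2 * (n * (k + 1)) * m with hsdef
    have hms : m ≤ s := by
      rw [hsdef]
      refine Nat.le_mul_of_pos_left m ?_
      have hnpos : 0 < n := by omega
      positivity
    have hspos : 0 < s := lt_of_lt_of_le hm1 hms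
    obtain ⟨P⟩ : Nonempty (V ↪ (Fin (n - 1) → Fin m)) := by
      apply Function.Embedding.nonempty_of_card_le
      rw [Fintype.card_fun, Fintype.card_fin, Fintype.card_fin]
      exact hmN
    set X : V → Fin n → Fin s := fun v i =>
      if h : (i : ℕ) < n - 1 then Fin.castLE hms (P v ⟨(i : ℕ), h⟩) else ⟨0, hspos⟩ with hX
    have hXval : ∀ (v : V) (i : Fin n) (h : (i : ℕ) < n - 1),
        X v i = Fin.castLE hms (P v ⟨(i : ℕ), h⟩) := by
      intro v i h
      simp only [hX]
      rw [dif_pos h]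
    have hXprefix : ∀ v w : V, (∀ i : Fin n, (i : ℕ) < n - 1 → X v i = X w i) → v = w := by
      intro v w h
      apply P.injective
      funext j
      have hj : (j : ℕ) < n - 1 := j.isLt
      have h5 := h ⟨(j : ℕ), by omega⟩ hj
      rw [hXval v _ hj, hXval w _ hj] at h5
      have h7 := Fin.castLE_injective hms h5
      simpa using h7
    have hbox : ∀ (w : V) (d : ℕ), d < n - 1 →
        {v : V | ∀ i : Fin n, (i : ℕ) < d → X v i = X w i}.ncard ≤ m ^ (n - 1 - d) := by
      intro w d hd
      have hinj : Set.InjOn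
          (fun v => fun j : Fin (n - 1 - d) => P v ⟨d + (j : ℕ), by have := j.isLt; omega⟩)
          {v : V | ∀ i : Fin n, (i : ℕ) < d → X v i = X w i} := by
        intro v hv v' hv' himg
        apply P.injective
        funext j
        by_cases hjd : (j : ℕ) < d
        · have hjn : (j : ℕ) < n := by have := j.isLt; omega
          have h5 : X v ⟨(j : ℕ), hjn⟩ = X v' ⟨(j : ℕ), hjn⟩ := by
            rw [hv ⟨(j : ℕ), hjn⟩ hjd, hv' ⟨(j : ℕ), hjn⟩ hjd]
          have hj : (j : ℕ) < n - 1 := j.isLt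
          rw [hXval v _ hj, hXval v' _ hj] at h5
          have h7 := Fin.castLE_injective hms h5
          simpa using h7
        · have hjn : (j : ℕ) - d < n - 1 - d := by have := j.isLt; omega
          have h5 := congrFun himg ⟨(j : ℕ) - d, hjn⟩
          simp only at h5
          have h6 : (⟨d + ((j : ℕ) - d), by have := j.isLt; omega⟩ : Fin (n - 1)) = j :=
            Fin.ext (by simp only [Fin.val_mk]; omega)
          rwa [h6] at h5
      have hle := Set.ncard_le_ncard_of_injOn _ (fun v _ => Set.mem_univ _) hinj
        Set.finite_univ
      rw [Set.ncard_univ, Nat.card_eq_fintype_card, Fintype.card_fun, Fintype.card_fin,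
        Fintype.card_fin] at hle
      exact hle
    obtain ⟨H, hSep⟩ := KB.exists_sep n k m s hn hm1 hsdef Γ X hdeg hbox
    set κ : V ≃ Fin (Fintype.card V) := Fintype.equivFin V with hκ
    refine ⟨⟨X,
      fun u v _ => if κ u ≤ κ v then KB.route n s X H u v else (KB.route n s X H v u).reverse,
      ?_, ?_, ?_⟩⟩
    · -- walk_symm
      intro u v h
      have huv : u ≠ v := Γ.ne_of_adj h
      have hκne : κ u ≠ κ v := fun hc => huv (κ.injective hc)
      show (if κ v ≤ κ u then KB.route n s X H v u else (KB.route n s X H u v).reverse)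
        = (if κ u ≤ κ v then KB.route n s X H u v else (KB.route n s X H v u).reverse).reverse
      rcases lt_or_gt_of_ne hκne with hlt | hgt
      · rw [if_pos hlt.le, if_neg (not_le.2 hlt)]
      · rw [if_pos hgt.le, if_neg (not_le.2 hgt), SimpleGraph.Walk.reverse_reverse]
    · -- vmap_bound
      intro w
      by_cases hw : ∃ v : V, X v = w
      · obtain ⟨v0, rfl⟩ := hw
        have hsub : {v : V | X v = X v0} ⊆ {v0} := by
          intro v hv
          have : v = v0 := hXprefix v v0 (fun i _ => congrFun hv i)
          simpa using this
        calc {v : V | X v = X v0}.ncard ≤ ({v0} : Set V).ncard :=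
              Set.ncard_le_ncard hsub (Set.finite_singleton _)
          _ = 1 := Set.ncard_singleton _
          _ ≤ k + n := by omega
      · have h0 : {v : V | X v = w} = ∅ := by
          ext v
          simp only [Set.mem_setOf_eq, Set.mem_empty_iff_false, iff_false]
          exact fun hc => hw ⟨v, hc⟩
        rw [h0, Set.ncard_empty]
        exact Nat.zero_le _
    · -- edge_bound
      intro ε
      have hcount : ∀ S : Set (Sym2 V),
          (∀ e' ∈ S, e' ∈ Γ.edgeSet ∧ ∃ w : V, w ∈ e' ∧
            ∃ (d : ℕ) (hd : d < n) (c c' : Fin s), c ≠ c' ∧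
            ε = s(Function.update
                    (fun i : Fin n => if (i : ℕ) < d then X w i else H e' i) ⟨d, hd⟩ c,
                  Function.update
                    (fun i : Fin n => if (i : ℕ) < d then X w i else H e' i) ⟨d, hd⟩ c')) →
          S.ncard ≤ k + n := by
        intro S hS
        rcases Set.eq_empty_or_nonempty S with rfl | ⟨e₀, he₀⟩
        · rw [Set.ncard_empty]
          exact Nat.zero_le _
        · obtain ⟨hE₀, w₀, hw₀, d₀, hd₀, c₀, c₀', hc₀, hrep₀⟩ := hS e₀ he₀
          by_cases hcase : d₀ < n - 1
          · have hsubS : S ⊆ {e₀} := by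
              intro e' he'
              obtain ⟨hE', w, hw, d, hd, c, c', hc, hrep⟩ := hS e' he'
              obtain ⟨hdeq, hoff⟩ := KB.update_pair_eq hc (hrep.symm.trans hrep₀)
              have hdd : d = d₀ := by simpa using hdeq
              subst hdd
              have heq : e' = e₀ := by
                by_contra hne'
                refine hSep e' hE' e₀ hE₀ hne' w w₀ hw hw₀ d hcase ?_ ?_
                · intro i hi
                  have h5 : (if (i : ℕ) < d then X w i else H e' i)
                      = (if (i : ℕ) < d then X w₀ i else H e₀ i) :=
                    hoff i (by intro hci; rw [hci] at hi; simp at hi)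
                  rwa [if_pos hi, if_pos hi] at h5
                · intro i hi
                  have h5 : (if (i : ℕ) < d then X w i else H e' i)
                      = (if (i : ℕ) < d then X w₀ i else H e₀ i) :=
                    hoff i (by intro hci; rw [hci] at hi; simp at hi)
                  rwa [if_neg (by omega), if_neg (by omega)] at h5
              simpa using heq
            calc S.ncard ≤ ({e₀} : Set (Sym2 V)).ncard :=
                  Set.ncard_le_ncard hsubS (Set.finite_singleton _)
              _ = 1 := Set.ncard_singleton _
              _ ≤ k + n := by omega
          · have hsubS : S ⊆ ↑(Γ.incidenceFinset w₀) := by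
              intro e' he'
              obtain ⟨hE', w, hw, d, hd, c, c', hc, hrep⟩ := hS e' he'
              obtain ⟨hdeq, hoff⟩ := KB.update_pair_eq hc (hrep.symm.trans hrep₀)
              have hdd : d = d₀ := by simpa using hdeq
              subst hdd
              have hXw : ∀ i : Fin n, (i : ℕ) < n - 1 → X w i = X w₀ i := by
                intro i hi
                have h5 : (if (i : ℕ) < d then X w i else H e' i)
                    = (if (i : ℕ) < d then X w₀ i else H e₀ i) :=
                  hoff i (by intro hci; rw [hci] at hi; simp at hi; omega)
                rwa [if_pos (by omega), if_pos (by omega)] at h5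
              have hww : w = w₀ := hXprefix w w₀ hXw
              rw [Finset.mem_coe, SimpleGraph.mem_incidenceFinset]
              exact ⟨hE', hww ▸ hw⟩
            calc S.ncard ≤ (↑(Γ.incidenceFinset w₀) : Set (Sym2 V)).ncard :=
                  Set.ncard_le_ncard hsubS (Γ.incidenceFinset w₀).finite_toSet
              _ = (Γ.incidenceFinset w₀).card := Set.ncard_coe_finset _
              _ = Γ.degree w₀ := Γ.card_incidenceFinset_eq_degree w₀
              _ ≤ k := by
                  have h1 : Γ.degree w₀ = (Γ.neighborSet w₀).ncard := by
                    rw [Set.ncard_eq_toFinset_card']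
                    rfl
                  rw [h1]
                  exact hdeg w₀
              _ ≤ k + n := by omega
      apply hcount
      rintro e' ⟨u, v, h, rfl, hε'⟩
      refine ⟨(SimpleGraph.mem_edgeSet Γ).2 h, ?_⟩
      have hε'' : ε ∈ ((if κ u ≤ κ v then KB.route n s X H u v
          else (KB.route n s X H v u).reverse) : (gridGraph n s).Walk (X u) (X v)).edges := hε'
      split_ifs at hε'' with hcond
      · obtain ⟨w, hwor, res⟩ := KB.route_edges X H u v ε hε''
        refine ⟨w, ?_, res⟩
        rcases hwor with rfl | rfl
        · exact Sym2.mem_mk_left _ _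
        · exact Sym2.mem_mk_right _ _
      · rw [SimpleGraph.Walk.edges_reverse, List.mem_reverse] at hε''
        obtain ⟨w, hwor, res⟩ := KB.route_edges X H v u ε hε''
        have hswap : s(v, u) = s(u, v) := Sym2.eq_swap
        rw [hswap] at res
        refine ⟨w, ?_, res⟩
        rcases hwor with rfl | rfl
        · exact Sym2.mem_mk_right _ _
        · exact Sym2.mem_mk_left _ _
end
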